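/- arXiv:1909.07121 — 8 statements merged into one kernel-verified Lean document; each statement's English description precedes it below -/
import Mathlib

section
/- The ideal norm on Z[√2] does not satisfy the quasi-triangle inequality: there is no constant C in N such that N(x+y) ≤ C·(N(x) + N(y)) for all x, y in Z[√2], where N(x) = |Z[√2]/(x)| for nonzero x. Specifically, with u = 1+√2 and ū = 1−√2, the element u^r + ū^r = 2a_r (where u^r = a_r + b_r√2) has norm 4a_r² which is unbounded as r grows, while N(u^r) + N(ū^r) = 2 for all r. -/
/-- The additive equivalence `ℤ√2 ≃+ ℤ × ℤ` given by coordinates. -/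
def zsqrtdAddEquiv : ℤ√2 ≃+ ℤ × ℤ where
  toFun x := (x.re, x.im)
  invFun p := ⟨p.1, p.2⟩
  left_inv x := rfl
  right_inv p := rfl
  map_add' x y := rfl

lemma card_quot_intCast (c : ℤ) :
    Nat.card (ℤ√2 ⧸ Ideal.span {(c : ℤ√2)}) = c.natAbs * c.natAbs := by
  have hk : (Ideal.span {(c : ℤ√2)}).toAddSubgroup =
      AddSubgroup.comap zsqrtdAddEquiv.toAddMonoidHom
        ((AddSubgroup.zmultiples c).prod (AddSubgroup.zmultiples c)) := by
    ext x
    simp only [Submodule.mem_toAddSubgroup, AddSubgroup.mem_comap]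
    constructor
    · intro hx
      rw [Ideal.mem_span_singleton'] at hx
      obtain ⟨z, rfl⟩ := hx
      constructor
      · exact ⟨z.re, by simp [zsqrtdAddEquiv, Zsqrtd.re_mul, mul_comm]⟩
      · exact ⟨z.im, by simp [zsqrtdAddEquiv, Zsqrtd.im_mul, mul_comm]⟩
    · rintro ⟨⟨k, hk⟩, ⟨l, hl⟩⟩
      rw [Ideal.mem_span_singleton']
      refine ⟨⟨k, l⟩, ?_⟩
      have hk' : k * c = x.re := by simpa [zsqrtdAddEquiv] using hk
      have hl' : l * c = x.im := by simpa [zsqrtdAddEquiv] using hl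
      ext
      · simp [Zsqrtd.re_mul, ← hk', mul_comm]
      · simp [Zsqrtd.im_mul, ← hl', mul_comm]
  have : Nat.card (ℤ√2 ⧸ Ideal.span {(c : ℤ√2)}) =
      (Ideal.span {(c : ℤ√2)}).toAddSubgroup.index := rfl
  rw [this, hk, AddSubgroup.index_comap_of_surjective _ zsqrtdAddEquiv.surjective,
    AddSubgroup.index_prod, Int.index_zmultiples]

lemma card_quot_unit {x : ℤ√2} (hx : IsUnit x) :
    Nat.card (ℤ√2 ⧸ Ideal.span {x}) = 1 := by
  rw [Ideal.span_singleton_eq_top.mpr hx]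
  have : Subsingleton (ℤ√2 ⧸ (⊤ : Ideal (ℤ√2))) :=
    Submodule.Quotient.subsingleton_iff.mpr rfl
  exact Nat.card_eq_one_iff_unique.mpr ⟨⟨Subsingleton.elim⟩, ⟨0⟩⟩

lemma isUnit_u : IsUnit ((⟨1, 1⟩ : ℤ√2)) :=
  isUnit_iff_exists_inv.mpr ⟨⟨-1, 1⟩, by ext <;> simp [Zsqrtd.re_mul, Zsqrtd.im_mul]⟩

lemma isUnit_ubar : IsUnit ((⟨1, -1⟩ : ℤ√2)) :=
  isUnit_iff_exists_inv.mpr ⟨⟨-1, -1⟩, by ext <;> simp [Zsqrtd.re_mul, Zsqrtd.im_mul]⟩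

lemma sum_eq (r : ℕ) :
    (⟨1, 1⟩ : ℤ√2) ^ r + (⟨1, -1⟩ : ℤ√2) ^ r = ((2 * ((⟨1, 1⟩ : ℤ√2) ^ r).re : ℤ) : ℤ√2) := by
  have h : (⟨1, -1⟩ : ℤ√2) ^ r = star ((⟨1, 1⟩ : ℤ√2) ^ r) := by
    rw [star_pow]
    norm_num [Zsqrtd.star_mk]
  rw [h]
  ext
  · simp only [Zsqrtd.re_add, Zsqrtd.re_star, Zsqrtd.re_intCast]; ring
  · simp only [Zsqrtd.im_add, Zsqrtd.im_star, Zsqrtd.im_intCast]; ring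

lemma re_lb (r : ℕ) : 1 ≤ ((⟨1, 1⟩ : ℤ√2) ^ r).re ∧ (r : ℤ) ≤ ((⟨1, 1⟩ : ℤ√2) ^ r).im := by
  induction r with
  | zero => simp
  | succ n ih =>
    obtain ⟨h1, h2⟩ := ih
    rw [pow_succ]
    constructor
    · simp only [Zsqrtd.re_mul]
      push_cast
      nlinarith [Nat.cast_nonneg (α := ℤ) n]
    · simp only [Zsqrtd.im_mul]
      push_cast
      nlinarith [Nat.cast_nonneg (α := ℤ) n]

lemma card_sum (r : ℕ) :
    Nat.card (ℤ√2 ⧸ Ideal.span {(⟨1, 1⟩ : ℤ√2) ^ r + (⟨1, -1⟩ : ℤ√2) ^ r}) =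
      (4 * ((⟨1, 1⟩ : ℤ√2) ^ r).re ^ 2).natAbs := by
  rw [sum_eq, card_quot_intCast]
  rw [← Int.natAbs_mul]
  congr 1
  ring

/-- The ideal norm on `ℤ[√2]` does not satisfy the quasi-triangle inequality: there is no
`C : ℕ` with `N(x+y) ≤ C·(N(x)+N(y))` for all `x, y`. Specifically, with `u = 1+√2` and
`ū = 1-√2`, we have `N(u^r) + N(ū^r) = 2` for all `r`, while
`N(u^r + ū^r) = 4·a_r²` (where `u^r = a_r + b_r√2`) is unbounded as `r` grows. -/
theorem zsqrtd_two_no_quasi_triangle :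
    (¬ ∃ C : ℕ, ∀ x y : ℤ√2,
      Nat.card (ℤ√2 ⧸ Ideal.span {x + y}) ≤
        C * (Nat.card (ℤ√2 ⧸ Ideal.span {x}) + Nat.card (ℤ√2 ⧸ Ideal.span {y}))) ∧
    (∀ r : ℕ,
      Nat.card (ℤ√2 ⧸ Ideal.span {(⟨1, 1⟩ : ℤ√2) ^ r}) +
        Nat.card (ℤ√2 ⧸ Ideal.span {(⟨1, -1⟩ : ℤ√2) ^ r}) = 2) ∧
    (∀ r : ℕ,
      Nat.card (ℤ√2 ⧸ Ideal.span {(⟨1, 1⟩ : ℤ√2) ^ r + (⟨1, -1⟩ : ℤ√2) ^ r}) =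
        (4 * ((⟨1, 1⟩ : ℤ√2) ^ r).re ^ 2).natAbs) ∧
    (∀ C : ℕ, ∃ r : ℕ,
      C < Nat.card (ℤ√2 ⧸ Ideal.span {(⟨1, 1⟩ : ℤ√2) ^ r + (⟨1, -1⟩ : ℤ√2) ^ r})) := by
  have hsum2 : ∀ r : ℕ,
      Nat.card (ℤ√2 ⧸ Ideal.span {(⟨1, 1⟩ : ℤ√2) ^ r}) +
        Nat.card (ℤ√2 ⧸ Ideal.span {(⟨1, -1⟩ : ℤ√2) ^ r}) = 2 := fun r => by
    rw [card_quot_unit (isUnit_u.pow r), card_quot_unit (isUnit_ubar.pow r)]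
  have hbig : ∀ C : ℕ, ∃ r : ℕ,
      C < Nat.card (ℤ√2 ⧸ Ideal.span {(⟨1, 1⟩ : ℤ√2) ^ r + (⟨1, -1⟩ : ℤ√2) ^ r}) := by
    intro C
    refine ⟨C + 1, ?_⟩
    rw [card_sum]
    obtain ⟨h1, h2⟩ := re_lb C
    have ha : (2 * C + 1 : ℤ) ≤ ((⟨1, 1⟩ : ℤ√2) ^ (C + 1)).re := by
      rw [pow_succ]
      simp only [Zsqrtd.re_mul]
      nlinarith
    set a : ℤ := ((⟨1, 1⟩ : ℤ√2) ^ (C + 1)).re with hadef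
    have hC : (C : ℤ) < 4 * a ^ 2 := by nlinarith
    have h0 : (0 : ℤ) ≤ 4 * a ^ 2 := by positivity
    omega
  refine ⟨?_, hsum2, card_sum, hbig⟩
  rintro ⟨C, h⟩
  obtain ⟨r, hr⟩ := hbig (2 * C)
  have := h ((⟨1, 1⟩ : ℤ√2) ^ r) ((⟨1, -1⟩ : ℤ√2) ^ r)
  rw [card_quot_unit (isUnit_u.pow r), card_quot_unit (isUnit_ubar.pow r)] at this
  omega
end

section
/- Let A be a finite quotient PID with fraction field K, and let B be an integral domain that is a finitely generated free A-module of rank n, with fraction field L. Then for any nonzero α in B, the cardinality of B/αB equals N_A(N_{L/K}(α)), where N_{L/K}(α) is the determinant of multiplication by α on L viewed as a K-vector space, and N_A(a) = |A/aA|. -/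
open Ideal

/-- Multiplicativity of quotient cardinality for principal ideals in a domain. -/
private theorem card_quot_span_mul {A : Type*} [CommRing A] [IsDomain A]
    {x y : A} (hx : x ≠ 0) :
    Nat.card (A ⧸ Ideal.span {x * y}) =
      Nat.card (A ⧸ Ideal.span ({x} : Set A)) * Nat.card (A ⧸ Ideal.span ({y} : Set A)) := by
  have hle : Ideal.span {x * y} ≤ Ideal.span ({x} : Set A) :=
    Ideal.span_singleton_le_span_singleton.mpr ⟨y, rfl⟩
  rw [← Submodule.card_quotient_mul_card_quotient (Ideal.span {x}) (Ideal.span {x * y}) hle,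
    mul_comm]
  congr 1
  let g : A →ₗ[A] A ⧸ Ideal.span {x * y} :=
    (Ideal.span {x * y}).mkQ ∘ₗ (LinearMap.mul A A x)
  have hker : LinearMap.ker g = Ideal.span ({y} : Set A) := by
    ext z
    simp only [g, LinearMap.mem_ker, LinearMap.comp_apply, Submodule.mkQ_apply,
      Submodule.Quotient.mk_eq_zero, Ideal.mem_span_singleton, LinearMap.mul_apply']
    constructor
    · rintro ⟨u, hu⟩
      exact ⟨u, mul_left_cancel₀ hx (by rw [hu]; ring)⟩
    · rintro ⟨u, rfl⟩
      exact ⟨u, by ring⟩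
  have hrange : LinearMap.range g =
      Submodule.map (Ideal.span {x * y}).mkQ (Ideal.span ({x} : Set A)) := by
    rw [LinearMap.range_comp]
    congr 1
    ext z
    simp only [LinearMap.mem_range, LinearMap.mul_apply', Ideal.mem_span_singleton]
    exact ⟨fun ⟨w, hw⟩ => ⟨w, hw.symm⟩, fun ⟨w, hw⟩ => ⟨w, hw.symm⟩⟩
  calc Nat.card (Submodule.map (Ideal.span {x * y}).mkQ (Ideal.span ({x} : Set A)))
      = Nat.card (LinearMap.range g) := by rw [hrange]
    _ = Nat.card (A ⧸ LinearMap.ker g) :=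
        (Nat.card_congr g.quotKerEquivRange.toEquiv).symm
    _ = Nat.card (A ⧸ Ideal.span ({y} : Set A)) := by rw [hker]

/-- A nonzero element divides the image of its norm. -/
private theorem dvd_algebraMap_norm' {A B : Type*} [CommRing A] [CommRing B] [Algebra A B]
    {n : ℕ} (b : Module.Basis (Fin n) A B) (c : B) :
    ∃ d : B, algebraMap A B (Algebra.norm A c) = c * d := by
  classical
  let M := Algebra.leftMulMatrix b c
  refine ⟨Matrix.toLin b b (Matrix.adjugate M) 1, ?_⟩
  have h1 : c * Matrix.toLin b b (Matrix.adjugate M) 1 =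
      Matrix.toLin b b (M * Matrix.adjugate M) 1 := by
    rw [Matrix.toLin_mul b b b]
    have : Matrix.toLin b b M = Algebra.lmul A B c := by
      simp only [M, Algebra.leftMulMatrix_apply, Matrix.toLin_toMatrix]
    simp [this]
  rw [h1, Matrix.mul_adjugate, Algebra.norm_eq_matrix_det b]
  simp [Algebra.algebraMap_eq_smul_one]
  rfl

/-- Let `A` be a finite quotient PID with fraction field `K`, and `B` a domain that is a
finitely generated free `A`-module of rank `n`, with fraction field `L`. Then for any
nonzero `α ∈ B`, `|B/αB| = N_A(N_{L/K}(α))`, where `N_{L/K}(α)` is the determinant of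
multiplication by `α` on `L` as a `K`-vector space (an element of `A`), and
`N_A(a) = |A/aA|`. -/
theorem card_quotient_eq_normA_norm
    (A : Type*) [CommRing A] [IsDomain A] [IsPrincipalIdealRing A]
    (K : Type*) [Field K] [Algebra A K] [IsFractionRing A K]
    (B : Type*) [CommRing B] [IsDomain B] [Algebra A B]
    (L : Type*) [Field L] [Algebra B L] [IsFractionRing B L]
    [Algebra A L] [Algebra K L] [IsScalarTower A B L] [IsScalarTower A K L]
    (n : ℕ) (b : Module.Basis (Fin n) A B)
    (hfq : ∀ I : Ideal A, I ≠ ⊥ → Finite (A ⧸ I))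
    (α : B) (hα : α ≠ 0) (a : A)
    (ha : algebraMap A K a = Algebra.norm K (algebraMap B L α)) :
    Nat.card (B ⧸ Ideal.span {α}) = Nat.card (A ⧸ Ideal.span {a}) := by
  classical
  haveI : Module.Finite A B := Module.Finite.of_basis b
  haveI : Module.Free A B := Module.Free.of_basis b
  have hinjAK : Function.Injective (algebraMap A K) := IsFractionRing.injective A K
  have hinjBL : Function.Injective (algebraMap B L) := IsFractionRing.injective B L
  -- L is the localization of B at the image of A⁰
  haveI : IsLocalization (Algebra.algebraMapSubmonoid B (nonZeroDivisors A)) L := by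
    refine ⟨⟨?_, ?_, ?_⟩⟩
    · rintro ⟨_, s, hs, rfl⟩
      have hs0 : s ≠ 0 := nonZeroDivisors.ne_zero hs
      have h2 : algebraMap B L (algebraMap A B s) = algebraMap K L (algebraMap A K s) := by
        rw [← IsScalarTower.algebraMap_apply, ← IsScalarTower.algebraMap_apply]
      rw [h2]
      refine isUnit_iff_ne_zero.mpr ?_
      have : algebraMap A K s ≠ 0 := fun h => hs0 (hinjAK (by simpa using h))
      exact fun h => this ((map_eq_zero (algebraMap K L)).mp h)
    · intro z
      obtain ⟨⟨β, c⟩, hc⟩ := IsLocalization.surj (nonZeroDivisors B) z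
      obtain ⟨d, hd⟩ := dvd_algebraMap_norm' b (c : B)
      have hc0 : (c : B) ≠ 0 := nonZeroDivisors.ne_zero c.2
      have hN : Algebra.norm A (c : B) ≠ 0 := Algebra.norm_ne_zero_iff.mpr hc0
      refine ⟨⟨β * d, ⟨algebraMap A B (Algebra.norm A (c : B)),
        Algebra.norm A (c : B), mem_nonZeroDivisors_of_ne_zero hN, rfl⟩⟩, ?_⟩
      show z * algebraMap B L (algebraMap A B (Algebra.norm A (c : B))) =
        algebraMap B L (β * d)
      rw [hd, _root_.map_mul, _root_.map_mul, ← mul_assoc, hc]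
    · intro x y h
      exact ⟨1, by rw [hinjBL h]⟩
  -- `a` equals the norm of `α`
  have hnorm := Algebra.norm_localization (Rₘ := K) (Sₘ := L) A (nonZeroDivisors A) α
  have ha' : a = Algebra.norm A α := hinjAK (by rw [ha, hnorm])
  -- Smith normal form
  have hI : Ideal.span ({α} : Set B) ≠ ⊥ := by
    simpa [Ideal.span_singleton_eq_bot] using hα
  set I : Ideal B := Ideal.span {α} with hIdef
  let sc := I.smithCoeffs b hI
  have hsc : ∀ i, sc i ≠ 0 := Ideal.smithCoeffs_ne_zero b I hI
  have hcardB : Nat.card (B ⧸ I) = ∏ i, Nat.card (A ⧸ Ideal.span ({sc i} : Set A)) := by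
    rw [Nat.card_congr (I.quotientEquivPiSpan b hI).toEquiv, Nat.card_pi]
  -- determinant computation: norm α is associated to ∏ sc i
  let b' := I.ringBasis b hI
  let ab := I.selfBasis b hI
  have ab_eq := I.selfBasis_def b hI
  let e1 : B ≃ₗ[A] I := b'.equiv ab (Equiv.refl _)
  let f : B →ₗ[A] B := ((Submodule.subtype I).restrictScalars A) ∘ₗ (e1 : B →ₗ[A] I)
  have hdetf : LinearMap.det f = ∏ i, sc i := by
    have f_apply : ∀ x, f x = b'.equiv ab (Equiv.refl _) x := fun x => rfl
    have hfb' : ∀ i, f (b' i) = sc i • b' i := by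
      intro i
      rw [f_apply, b'.equiv_apply, Equiv.refl_apply, ab_eq]
    rw [← LinearMap.det_toMatrix b']
    have : LinearMap.toMatrix b' b' f = Matrix.diagonal sc := by
      ext i j
      rw [LinearMap.toMatrix_apply, hfb' j, map_smul, Module.Basis.repr_self, Finsupp.smul_single,
        smul_eq_mul, mul_one]
      by_cases h : i = j
      · rw [h, Matrix.diagonal_apply_eq, Finsupp.single_eq_same]
      · rw [Matrix.diagonal_apply_ne _ h, Finsupp.single_eq_of_ne h]
    rw [this, Matrix.det_diagonal]
  let e2 : B ≃ₗ[A] I := b.equiv (Ideal.basisSpanSingleton b hα) (Equiv.refl _)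
  have hdet2 : ((Submodule.subtype I).restrictScalars A) ∘ₗ (e2 : B →ₗ[A] I) =
      Algebra.lmul A B α := by
    refine b.ext fun i => ?_
    simp only [LinearMap.comp_apply, LinearEquiv.coe_coe, e2, Module.Basis.equiv_apply,
      Equiv.refl_apply, LinearMap.coe_restrictScalars, Submodule.coe_subtype]
    exact Ideal.basisSpanSingleton_apply b hα i
  have hassoc : Associated (Algebra.norm A α) (∏ i, sc i) := by
    rw [← hdetf, Algebra.norm_apply, ← hdet2]
    exact LinearMap.associated_det_comp_equiv _ _ _
  -- conclude
  have hspan : Ideal.span ({a} : Set A) = Ideal.span {∏ i, sc i} := by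
    rw [ha', Ideal.span_singleton_eq_span_singleton]
    exact hassoc
  rw [hspan, hcardB]
  -- product formula
  clear_value sc
  clear hspan hassoc hdet2 hdetf hcardB ab_eq ha ha' hnorm
  induction (Finset.univ : Finset (Fin n)) using Finset.induction_on with
  | empty => simp
  | @insert i s hi ih =>
      rw [Finset.prod_insert hi, Finset.prod_insert hi,
        card_quot_span_mul (hsc i), ih]
end

section
/- Let A be a basic PID and B a Dedekind domain that is a finitely generated free A-module of rank n with basis x_1, ..., x_n. Then there exists a constant C in N such that for every α = c_1x_1 + ... + c_nx_n in B, N_B(α) ≤ C · (max_i N_A(c_i))^n, where N_B(α) = |B/αB| for nonzero α and N_B(0) = 0, and N_A(c) = |A/cA|. -/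
open Ideal

section Aux

variable {A : Type*} [CommRing A] [IsDomain A]

omit [IsDomain A] in
lemma normA_zero [Infinite A] : Nat.card (A ⧸ (Ideal.span {(0:A)} : Ideal A)) = 0 := by
  rw [Nat.card_congr ((Submodule.quotEquivOfEqBot _ (by simp)).toEquiv)]
  exact Nat.card_eq_zero_of_infinite

lemma normA_mul [Infinite A] (a b : A) :
    Nat.card (A ⧸ (Ideal.span {a * b} : Ideal A)) =
      Nat.card (A ⧸ (Ideal.span {a} : Ideal A)) * Nat.card (A ⧸ (Ideal.span {b} : Ideal A)) := by
  rcases eq_or_ne a 0 with rfl | ha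
  · rw [zero_mul, normA_zero]; exact (zero_mul _).symm
  rcases eq_or_ne b 0 with rfl | hb
  · rw [mul_zero, normA_zero]; exact (mul_zero _).symm
  have hle : (Ideal.span {a * b} : Ideal A) ≤ Ideal.span {a} :=
    Ideal.span_singleton_le_span_singleton.mpr ⟨b, rfl⟩
  have key := Submodule.card_quotient_mul_card_quotient (Ideal.span {a}) (Ideal.span {a * b}) hle
  set I : Ideal A := Ideal.span {a * b} with hI
  set φ : A →ₗ[A] A ⧸ I := LinearMap.toSpanSingleton A (A ⧸ I) (I.mkQ a) with hφ
  have hker : LinearMap.ker φ = Ideal.span {b} := by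
    ext t
    show t • (I.mkQ a) = 0 ↔ _
    rw [← map_smul, smul_eq_mul, Submodule.mkQ_apply, Submodule.Quotient.mk_eq_zero, hI]
    rw [show ((t * a ∈ Ideal.span {a * b}) ↔ a * b ∣ t * a) from Ideal.mem_span_singleton,
      show ((t ∈ Ideal.span {b}) ↔ b ∣ t) from Ideal.mem_span_singleton,
      mul_comm t a]
    exact mul_dvd_mul_iff_left ha
  have hrange : Submodule.map I.mkQ (Ideal.span {a} : Ideal A) = LinearMap.range φ := by
    rw [← Ideal.submodule_span_eq, Submodule.map_span, Set.image_singleton,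
      ← LinearMap.span_singleton_eq_range]
  have hmap : Nat.card (Submodule.map I.mkQ (Ideal.span {a} : Ideal A))
      = Nat.card (A ⧸ (Ideal.span {b} : Ideal A)) := by
    rw [hrange, ← Nat.card_congr φ.quotKerEquivRange.toEquiv, hker]
  calc Nat.card (A ⧸ I)
      = Nat.card (Submodule.map I.mkQ (Ideal.span {a} : Ideal A)) *
        Nat.card (A ⧸ (Ideal.span {a} : Ideal A)) := key.symm
    _ = Nat.card (A ⧸ (Ideal.span {b} : Ideal A)) *
        Nat.card (A ⧸ (Ideal.span {a} : Ideal A)) := by rw [hmap]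
    _ = _ := mul_comm _ _

end Aux

section Aux2

variable {A : Type*} [CommRing A] [IsDomain A] [Infinite A]

lemma normA_prod {ι : Type*} (s : Finset ι) (f : ι → A) :
    Nat.card (A ⧸ (Ideal.span {∏ i ∈ s, f i} : Ideal A)) =
      ∏ i ∈ s, Nat.card (A ⧸ (Ideal.span {f i} : Ideal A)) := by
  classical
  induction s using Finset.induction_on with
  | empty =>
    simp only [Finset.prod_empty]
    rw [show (Ideal.span {(1:A)} : Ideal A) = ⊤ by simp]
    haveI : Subsingleton (A ⧸ (⊤ : Ideal A)) :=
      Submodule.Quotient.subsingleton_iff.mpr rfl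
    exact Nat.card_of_subsingleton 0
  | @insert a s ha ih =>
    rw [Finset.prod_insert ha, normA_mul, ih, Finset.prod_insert ha]

lemma normA_sum {Cq : ℕ} (hCq : 0 < Cq)
    (hq : ∀ x y : A, Nat.card (A ⧸ Ideal.span {x + y}) ≤
      Cq * (Nat.card (A ⧸ Ideal.span {x}) + Nat.card (A ⧸ Ideal.span {y})))
    {ι : Type*} (s : Finset ι) (f : ι → A) :
    Nat.card (A ⧸ (Ideal.span {∑ i ∈ s, f i} : Ideal A)) ≤
      Cq ^ s.card * ∑ i ∈ s, Nat.card (A ⧸ (Ideal.span {f i} : Ideal A)) := by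
  classical
  induction s using Finset.induction_on with
  | empty => simp [normA_zero]
  | @insert a s ha ih =>
    rw [Finset.sum_insert ha]
    calc Nat.card (A ⧸ (Ideal.span {f a + ∑ i ∈ s, f i} : Ideal A))
        ≤ Cq * (Nat.card (A ⧸ (Ideal.span {f a} : Ideal A)) +
            Nat.card (A ⧸ (Ideal.span {∑ i ∈ s, f i} : Ideal A))) := hq _ _
      _ ≤ Cq * (Nat.card (A ⧸ (Ideal.span {f a} : Ideal A)) +
            Cq ^ s.card * ∑ i ∈ s, Nat.card (A ⧸ (Ideal.span {f i} : Ideal A))) := by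
          exact Nat.mul_le_mul_left _ (Nat.add_le_add_left ih _)
      _ ≤ Cq * (Cq ^ s.card * Nat.card (A ⧸ (Ideal.span {f a} : Ideal A)) +
            Cq ^ s.card * ∑ i ∈ s, Nat.card (A ⧸ (Ideal.span {f i} : Ideal A))) := by
          have h1 : 1 ≤ Cq ^ s.card := Nat.one_le_pow _ _ hCq
          exact Nat.mul_le_mul_left _ (Nat.add_le_add_right
            (Nat.le_mul_of_pos_left _ (Nat.lt_of_lt_of_le Nat.zero_lt_one h1)) _)
      _ = Cq ^ (insert a s).card *
            ∑ i ∈ insert a s, Nat.card (A ⧸ (Ideal.span {f i} : Ideal A)) := by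
          rw [Finset.sum_insert ha, Finset.card_insert_of_notMem ha, pow_succ]
          ring

end Aux2

lemma card_quot_span_singleton {A : Type*} [CommRing A] [IsDomain A]
    [IsPrincipalIdealRing A] [Infinite A]
    {B : Type*} [CommRing B] [IsDomain B] [Algebra A B]
    {n : ℕ} (x : Module.Basis (Fin n) A B) {α : B} (hα : α ≠ 0) :
    Nat.card (B ⧸ (Ideal.span {α} : Ideal B)) =
      Nat.card (A ⧸ (Ideal.span {Algebra.norm A α} : Ideal A)) := by
  classical
  have hI : (Ideal.span {α} : Ideal B) ≠ ⊥ := by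
    simpa using hα
  rw [Nat.card_congr ((Ideal.span {α}).quotientEquivPiSpan x hI).toEquiv, Nat.card_pi]
  have h := associated_norm_prod_smith x hα
  have heq : (Ideal.span {Algebra.norm A α} : Ideal A) =
      Ideal.span {∏ i, (Ideal.span {α}).smithCoeffs x hI i} :=
    Ideal.span_singleton_eq_span_singleton.mpr h
  rw [heq, normA_prod]

/-- Let `A` be a basic PID and `B` a Dedekind domain that is a finitely generated free
`A`-module of rank `n` with basis `x_1, ..., x_n`. Then there is a constant `C ∈ ℕ` such
that for every `α = c_1 x_1 + ⋯ + c_n x_n` in `B`,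
`N_B(α) ≤ C · (max_i N_A(c_i))^n`, where `N_B(α) = |B/αB|` and `N_A(c) = |A/cA|`. -/
theorem norm_le_const_mul_max_pow
    (A : Type*) [CommRing A] [IsDomain A] [IsPrincipalIdealRing A]
    (hnf : ¬ IsField A)
    (hfq : ∀ I : Ideal A, I ≠ ⊥ → Finite (A ⧸ I))
    (hsmall : ∃ c : ℕ, 0 < c ∧ ∀ m : ℕ, 0 < m →
      m ≤ {x : A | Nat.card (A ⧸ Ideal.span {x}) ≤ c * m}.ncard)
    (hqt : ∃ C : ℕ, 0 < C ∧ ∀ x y : A,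
      Nat.card (A ⧸ Ideal.span {x + y}) ≤
        C * (Nat.card (A ⧸ Ideal.span {x}) + Nat.card (A ⧸ Ideal.span {y})))
    (B : Type*) [CommRing B] [IsDedekindDomain B] [Algebra A B]
    (n : ℕ) (x : Module.Basis (Fin n) A B) :
    ∃ C : ℕ, 0 < C ∧ ∀ c : Fin n → A,
      Nat.card (B ⧸ Ideal.span {∑ i, c i • x i}) ≤
        C * (Finset.univ.sup fun i => Nat.card (A ⧸ Ideal.span {c i})) ^ n := by
  classical
  obtain ⟨Cq, hCq, hq⟩ := hqt
  haveI hAinf : Infinite A := by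
    rw [← not_finite_iff_infinite]
    intro h
    exact hnf (Finite.isField_of_domain A)
  obtain ⟨i0⟩ : Nonempty (Fin n) := x.index_nonempty
  haveI hBinf : Infinite B := by
    refine Infinite.of_injective (fun a : A => a • x i0) ?_
    intro a b hab
    simpa [Module.Basis.repr_self] using congrArg (fun y => (x.repr y) i0) hab
  set T : Fin n → Matrix (Fin n) (Fin n) A := fun i => Algebra.leftMulMatrix x (x i) with hT
  set S : ℕ := ∑ i, ∑ p, ∑ q, Nat.card (A ⧸ Ideal.span {T i p q}) with hS
  set K : ℕ := Cq ^ n * S with hK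
  set F : ℕ := Fintype.card (Equiv.Perm (Fin n)) with hF
  refine ⟨Cq ^ F * F * K ^ n + 1, Nat.succ_pos _, fun c => ?_⟩
  set maxc : ℕ := Finset.univ.sup fun i => Nat.card (A ⧸ Ideal.span {c i}) with hmaxc
  set α : B := ∑ i, c i • x i with hαdef
  rcases eq_or_ne α 0 with h0 | h0
  · rw [h0, show Nat.card (B ⧸ (Ideal.span {(0:B)} : Ideal B)) = 0 from normA_zero]
    exact Nat.zero_le _
  rw [card_quot_span_singleton x h0, Algebra.norm_eq_matrix_det x]
  have hM : Algebra.leftMulMatrix x α = ∑ i, c i • T i := by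
    rw [hαdef, map_sum]
    exact Finset.sum_congr rfl fun i _ => map_smul _ _ _
  have hentry : ∀ p q, Nat.card (A ⧸ Ideal.span {(Algebra.leftMulMatrix x α) p q}) ≤
      K * maxc := by
    intro p q
    have he : (Algebra.leftMulMatrix x α) p q = ∑ i, c i * T i p q := by
      rw [hM]
      simp [Matrix.sum_apply, Matrix.smul_apply, smul_eq_mul]
    rw [he]
    calc Nat.card (A ⧸ (Ideal.span {∑ i, c i * T i p q} : Ideal A))
        ≤ Cq ^ (Finset.univ : Finset (Fin n)).card *
            ∑ i, Nat.card (A ⧸ (Ideal.span {c i * T i p q} : Ideal A)) :=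
          normA_sum hCq hq _ _
      _ = Cq ^ n * ∑ i, Nat.card (A ⧸ (Ideal.span {c i} : Ideal A)) *
            Nat.card (A ⧸ (Ideal.span {T i p q} : Ideal A)) := by
          rw [Finset.card_univ, Fintype.card_fin]
          exact congrArg _ (Finset.sum_congr rfl fun i _ => normA_mul _ _)
      _ ≤ Cq ^ n * ∑ i, maxc * Nat.card (A ⧸ (Ideal.span {T i p q} : Ideal A)) :=
          Nat.mul_le_mul_left _ (Finset.sum_le_sum fun i _ =>
            Nat.mul_le_mul_right _ (Finset.le_sup (f := fun i => Nat.card (A ⧸ (Ideal.span {c i} : Ideal A))) (Finset.mem_univ i)))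
      _ = Cq ^ n * (maxc * ∑ i, Nat.card (A ⧸ (Ideal.span {T i p q} : Ideal A))) := by
          exact congrArg (Cq ^ n * ·) (Finset.mul_sum _ _ _).symm
      _ ≤ Cq ^ n * (maxc * S) := by
          refine Nat.mul_le_mul_left _ (Nat.mul_le_mul_left _ ?_)
          refine Finset.sum_le_sum fun i _ => ?_
          calc Nat.card (A ⧸ (Ideal.span {T i p q} : Ideal A))
              ≤ ∑ q', Nat.card (A ⧸ (Ideal.span {T i p q'} : Ideal A)) :=
                Finset.single_le_sum
                  (f := fun q' => Nat.card (A ⧸ (Ideal.span {T i p q'} : Ideal A)))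
                  (fun _ _ => Nat.zero_le _) (Finset.mem_univ q)
            _ ≤ ∑ p', ∑ q', Nat.card (A ⧸ (Ideal.span {T i p' q'} : Ideal A)) :=
                Finset.single_le_sum
                  (f := fun p' => ∑ q', Nat.card (A ⧸ (Ideal.span {T i p' q'} : Ideal A)))
                  (fun _ _ => Nat.zero_le _) (Finset.mem_univ p)
      _ = K * maxc := by rw [hK]; ring
  have hsign : ∀ (u : ℤˣ) (p : A),
      Nat.card (A ⧸ (Ideal.span {u • p} : Ideal A)) =
        Nat.card (A ⧸ (Ideal.span {p} : Ideal A)) := by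
    intro u p
    rcases Int.units_eq_one_or u with h | h <;> subst h <;>
      simp [Units.smul_def, Ideal.span_singleton_neg]
  have hterm : ∀ σ : Equiv.Perm (Fin n),
      Nat.card (A ⧸ (Ideal.span {Equiv.Perm.sign σ •
        ∏ i, (Algebra.leftMulMatrix x α) (σ i) i} : Ideal A)) ≤ (K * maxc) ^ n := by
    intro σ
    rw [hsign, normA_prod]
    calc ∏ i, Nat.card (A ⧸ (Ideal.span {(Algebra.leftMulMatrix x α) (σ i) i} : Ideal A))
        ≤ ∏ _i : Fin n, (K * maxc) := Finset.prod_le_prod' (fun i _ => hentry (σ i) i)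
      _ = (K * maxc) ^ n := by rw [Finset.prod_const, Finset.card_univ, Fintype.card_fin]
  calc Nat.card (A ⧸ (Ideal.span {(Algebra.leftMulMatrix x α).det} : Ideal A))
      = Nat.card (A ⧸ (Ideal.span {∑ σ : Equiv.Perm (Fin n),
          Equiv.Perm.sign σ • ∏ i, (Algebra.leftMulMatrix x α) (σ i) i} : Ideal A)) := by
        rw [Matrix.det_apply]
    _ ≤ Cq ^ (Finset.univ : Finset (Equiv.Perm (Fin n))).card *
          ∑ σ : Equiv.Perm (Fin n), Nat.card (A ⧸ (Ideal.span {Equiv.Perm.sign σ •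
            ∏ i, (Algebra.leftMulMatrix x α) (σ i) i} : Ideal A)) :=
        normA_sum hCq hq _ _
    _ ≤ Cq ^ F * ∑ _σ : Equiv.Perm (Fin n), (K * maxc) ^ n := by
        rw [Finset.card_univ]
        exact Nat.mul_le_mul_left _ (Finset.sum_le_sum fun σ _ => hterm σ)
    _ = Cq ^ F * F * K ^ n * maxc ^ n := by
        rw [Finset.sum_const, Finset.card_univ, smul_eq_mul, mul_pow]
        ring
    _ ≤ (Cq ^ F * F * K ^ n + 1) * maxc ^ n :=
        Nat.mul_le_mul_right _ (Nat.le_succ _)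
end

section
/- Let B be a Dedekind domain with finite quotients whose ideal norm N(I) = |B/I| is multiplicative, and suppose there is a constant C such that every nonzero ideal I of B contains a nonzero element α with N(αB) ≤ C·N(I). Then the ideal class group of B is finite. -/
/-- Let `B` be a Dedekind domain with finite quotients whose ideal norm `N(I) = |B/I|` is
multiplicative, and suppose there is a constant `C` such that every nonzero ideal `I` of
`B` contains a nonzero `α` with `N(αB) ≤ C·N(I)`. Then the class group of `B` is finite. -/
theorem classGroup_finite_of_norm_bound
    (B : Type*) [CommRing B] [IsDedekindDomain B]
    (hfq : ∀ I : Ideal B, I ≠ ⊥ → Finite (B ⧸ I))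
    (hmul : ∀ I J : Ideal B, I ≠ ⊥ → J ≠ ⊥ →
      Nat.card (B ⧸ (I * J)) = Nat.card (B ⧸ I) * Nat.card (B ⧸ J))
    (C : ℕ)
    (hC : ∀ I : Ideal B, I ≠ ⊥ →
      ∃ α ∈ I, α ≠ 0 ∧ Nat.card (B ⧸ Ideal.span {α}) ≤ C * Nat.card (B ⧸ I)) :
    Finite (ClassGroup B) := by
  classical
  cases finite_or_infinite B with
  | inl hfin =>
      have hf : IsField B := Finite.isField_of_domain B
      letI := hf.toField
      infer_instance
  | inr hinf =>
      have hpos : ∀ I : Ideal B, I ≠ ⊥ → 0 < Nat.card (B ⧸ I) := by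
        intro I hI
        haveI := hfq I hI
        exact Nat.card_pos
      -- for each n ≥ 2, choose x with x^n ≠ x
      have hx : ∀ n : ℕ, ∃ x : B, 2 ≤ n → x ^ n ≠ x := by
        intro n
        by_cases hn : 2 ≤ n
        · by_contra h
          push_neg at h
          have hpoly : (Polynomial.X ^ n - Polynomial.X : Polynomial B) ≠ 0 := by
            intro hz
            have h1 : (Polynomial.X ^ n - Polynomial.X : Polynomial B).coeff n = 1 := by
              simp [Polynomial.coeff_X_pow, Polynomial.coeff_X]
              omega
            rw [hz] at h1
            simp at h1
          have hfin2 := Polynomial.finite_setOf_isRoot hpoly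
          have hsub : (Set.univ : Set B) ⊆ {y | Polynomial.IsRoot (Polynomial.X ^ n - Polynomial.X) y} := by
            intro y _
            simp [Polynomial.IsRoot, sub_eq_zero, (h y).2]
          exact Set.infinite_univ (hfin2.subset hsub)
        · exact ⟨0, fun h' => absurd h' hn⟩
      choose x hxs using hx
      set γ : B := ∏ n ∈ Finset.Icc 2 C, (x n ^ n - x n) with hγdef
      have hγ0 : γ ≠ 0 := by
        rw [hγdef]
        exact Finset.prod_ne_zero_iff.mpr fun n hn =>
          sub_ne_zero.mpr (hxs n (Finset.mem_Icc.mp hn).1)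
      -- every nonzero maximal ideal of norm ≤ C contains γ
      have hmem : ∀ P : Ideal B, P ≠ ⊥ → P.IsMaximal → Nat.card (B ⧸ P) ≤ C → γ ∈ P := by
        intro P hP0 hPmax hPC
        haveI := hfq P hP0
        haveI := hPmax
        haveI := Fintype.ofFinite (B ⧸ P)
        letI : Field (B ⧸ P) := Ideal.Quotient.field P
        set q := Nat.card (B ⧸ P) with hq
        have hq2 : 2 ≤ q := Finite.one_lt_card
        have key : x q ^ q - x q ∈ P := by
          have h1 : Ideal.Quotient.mk P (x q ^ q) = Ideal.Quotient.mk P (x q) := by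
            have h2 := FiniteField.pow_card (Ideal.Quotient.mk P (x q))
            rw [← Nat.card_eq_fintype_card] at h2
            rw [map_pow]
            exact h2
          exact (Ideal.Quotient.mk_eq_mk_iff_sub_mem _ _).mp h1
        have hdvd : (x q ^ q - x q) ∣ γ := Finset.dvd_prod_of_mem _ (Finset.mem_Icc.mpr ⟨hq2, hPC⟩)
        obtain ⟨c, hc⟩ := hdvd
        rw [hc]
        exact Ideal.mul_mem_right _ _ key
      -- main claim: γ^n ∈ I for nonzero I of norm n ≤ C
      have claim : ∀ n : ℕ, ∀ I : Ideal B, I ≠ ⊥ → Nat.card (B ⧸ I) = n → n ≤ C → γ ^ n ∈ I := by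
        intro n
        induction n using Nat.strong_induction_on with
        | _ n ih =>
          intro I hI0 hIn hnC
          by_cases hItop : I = ⊤
          · simp [hItop]
          · obtain ⟨P, hPmax, hIP⟩ := Ideal.exists_le_maximal I hItop
            have hP0 : P ≠ ⊥ := fun h => hI0 (le_bot_iff.mp (h ▸ hIP))
            haveI := hfq I hI0
            haveI := hfq P hP0
            have hsurjle : Nat.card (B ⧸ P) ≤ n := by
              rw [← hIn]
              refine Nat.card_le_card_of_surjective (Ideal.Quotient.factor hIP) ?_
              intro y
              obtain ⟨b, rfl⟩ := Ideal.Quotient.mk_surjective y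
              exact ⟨Ideal.Quotient.mk I b, Ideal.Quotient.factor_mk hIP b⟩
            obtain ⟨J, hJ⟩ := Ideal.dvd_iff_le.mpr hIP
            have hJ0 : J ≠ ⊥ := by
              rintro rfl
              rw [Ideal.mul_bot] at hJ
              exact hI0 hJ
            have hcard : n = Nat.card (B ⧸ P) * Nat.card (B ⧸ J) := by
              rw [← hIn, hJ, hmul P J hP0 hJ0]
            haveI := hPmax
            letI : Field (B ⧸ P) := Ideal.Quotient.field P
            have hq2 : 2 ≤ Nat.card (B ⧸ P) := Finite.one_lt_card
            have hJpos : 0 < Nat.card (B ⧸ J) := hpos J hJ0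
            have h2m : 2 * Nat.card (B ⧸ J) ≤ n := by
              rw [hcard]; exact Nat.mul_le_mul_right _ hq2
            have hJlt : Nat.card (B ⧸ J) < n := by omega
            have hJm : γ ^ Nat.card (B ⧸ J) ∈ J := ih _ hJlt J hJ0 rfl (by omega)
            have hγP : γ ∈ P := hmem P hP0 hPmax (le_trans hsurjle hnC)
            have hmm : γ ^ (Nat.card (B ⧸ J) + 1) ∈ I := by
              rw [hJ, pow_succ']
              exact Ideal.mul_mem_mul hγP hJm
            have hle : Nat.card (B ⧸ J) + 1 ≤ n := by omega
            have : γ ^ n = γ ^ (Nat.card (B ⧸ J) + 1) * γ ^ (n - (Nat.card (B ⧸ J) + 1)) := by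
              rw [← pow_add]
              congr 1
              omega
            rw [this]
            exact Ideal.mul_mem_right _ _ hmm
      -- every class is represented by an ideal containing γ^C
      have hne : ∀ I : {I : Ideal B // Ideal.span {γ ^ C} ≤ I}, I.1 ∈ nonZeroDivisors (Ideal B) := by
        intro I
        rw [mem_nonZeroDivisors_iff_ne_zero, ne_eq, Submodule.zero_eq_bot]
        intro h
        have h2 : Ideal.span {γ ^ C} ≤ (⊥ : Ideal B) := h ▸ I.2
        exact pow_ne_zero C hγ0 (by
          simpa [Ideal.span_singleton_eq_bot] using le_bot_iff.mp h2)
      have repr : ∀ c : ClassGroup B, ∃ I : {I : Ideal B // Ideal.span {γ ^ C} ≤ I},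
          ClassGroup.mk0 ⟨I.1, hne I⟩ = c := by
        intro c
        obtain ⟨⟨J, hJmem⟩, hJc⟩ := ClassGroup.mk0_surjective c⁻¹
        have hJ0 : J ≠ ⊥ := mem_nonZeroDivisors_iff_ne_zero.mp hJmem
        obtain ⟨α, hαJ, hα0, hbound⟩ := hC J hJ0
        have hspanle : Ideal.span {α} ≤ J := Ideal.span_le.mpr (Set.singleton_subset_iff.mpr hαJ)
        obtain ⟨I, hI⟩ := Ideal.dvd_iff_le.mpr hspanle
        have hspanα0 : Ideal.span {α} ≠ ⊥ := by
          simpa [Ideal.span_singleton_eq_bot] using hα0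
        have hI0 : I ≠ ⊥ := by
          rintro rfl
          rw [Ideal.mul_bot] at hI
          exact hspanα0 hI
        have hNI : Nat.card (B ⧸ I) ≤ C := by
          rw [hI, hmul J I hJ0 hI0] at hbound
          have hJpos := hpos J hJ0
          rw [mul_comm C _] at hbound
          exact Nat.le_of_mul_le_mul_left hbound hJpos
        have hIγ : Ideal.span {γ ^ C} ≤ I := by
          rw [Ideal.span_le, Set.singleton_subset_iff]
          have h1 : γ ^ Nat.card (B ⧸ I) ∈ I := claim _ I hI0 rfl hNI
          have h2 : γ ^ C = γ ^ Nat.card (B ⧸ I) * γ ^ (C - Nat.card (B ⧸ I)) := by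
            rw [← pow_add]
            congr 1
            omega
          rw [h2]
          exact Ideal.mul_mem_right _ _ h1
        refine ⟨⟨I, hIγ⟩, ?_⟩
        have hImem : I ∈ nonZeroDivisors (Ideal B) := mem_nonZeroDivisors_iff_ne_zero.mpr hI0
        have : ClassGroup.mk0 ⟨I, hImem⟩ = (ClassGroup.mk0 ⟨J, hJmem⟩)⁻¹ := by
          rw [ClassGroup.mk0_eq_mk0_inv_iff]
          refine ⟨α, hα0, ?_⟩
          show I * J = Ideal.span {α}
          rw [mul_comm]
          exact hI.symm
        rw [this, hJc, inv_inv]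
      -- finiteness
      have hspan0 : Ideal.span {γ ^ C} ≠ (⊥ : Ideal B) := by
        simpa [Ideal.span_singleton_eq_bot] using pow_ne_zero C hγ0
      haveI := hfq _ hspan0
      haveI : Finite (Ideal (B ⧸ Ideal.span {γ ^ C})) :=
        Finite.of_injective (fun I => (I : Set (B ⧸ Ideal.span {γ ^ C}))) SetLike.coe_injective
      haveI : Finite {I : Ideal B // Ideal.span {γ ^ C} ≤ I} := by
        apply Finite.of_injective
          (fun I : {I : Ideal B // Ideal.span {γ ^ C} ≤ I} =>
            Ideal.map (Ideal.Quotient.mk (Ideal.span {γ ^ C})) I.1)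
        intro I₁ I₂ h
        ext1
        have h1 := congrArg (Ideal.comap (Ideal.Quotient.mk (Ideal.span {γ ^ C}))) h
        rwa [Ideal.comap_map_of_surjective _ Ideal.Quotient.mk_surjective,
          Ideal.comap_map_of_surjective _ Ideal.Quotient.mk_surjective,
          ← RingHom.ker_eq_comap_bot, Ideal.mk_ker,
          sup_eq_left.mpr I₁.2, sup_eq_left.mpr I₂.2] at h1
      exact Finite.of_surjective
        (fun I : {I : Ideal B // Ideal.span {γ ^ C} ≤ I} => ClassGroup.mk0 ⟨I.1, hne I⟩)
        fun c => repr c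
end

section
/- Let A be a basic PID and B a Dedekind domain that is a finitely generated free A-module. Then the ideal class group of B is finite. -/
set_option linter.unusedSectionVars false
set_option maxHeartbeats 1000000
set_option synthInstance.maxHeartbeats 400000

open Ideal Submodule

/-- The element norm on a commutative ring: the cardinality of the quotient by the
principal ideal generated by `x` (`0` if infinite). -/
noncomputable def nuA' {A : Type*} [CommRing A] (x : A) : ℕ := Nat.card (A ⧸ Ideal.span {x})

/-- Multiplicativity of `cardQuot` in an infinite Dedekind domain
(generalizing Mathlib's `cardQuot_mul`). -/
theorem cardQuot_mul' {S : Type*} [CommRing S] [IsDedekindDomain S] [Infinite S] (I J : Ideal S) :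
    cardQuot (I * J) = cardQuot I * cardQuot J :=
  UniqueFactorizationMonoid.multiplicative_of_coprime cardQuot I J (cardQuot_bot _ _)
      (fun {I J} hI => by simp [Ideal.isUnit_iff.mp hI, Ideal.mul_top])
      (fun {I} i hI =>
        have : Ideal.IsPrime I := Ideal.isPrime_of_prime hI
        cardQuot_pow_of_prime hI.ne_zero)
      fun {I J} hIJ => cardQuot_mul_of_coprime <| Ideal.isCoprime_iff_sup_eq.mpr
        (Ideal.isUnit_iff.mp
          (hIJ (Ideal.dvd_iff_le.mpr le_sup_left) (Ideal.dvd_iff_le.mpr le_sup_right)))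

section Nu
variable {A : Type*} [CommRing A] [IsDomain A] [IsPrincipalIdealRing A] [Infinite A]

theorem nuA'_eq_cardQuot (x : A) : nuA' x = cardQuot (Ideal.span {x}) := rfl

@[simp] theorem nuA'_zero : nuA' (0 : A) = 0 := by
  rw [nuA'_eq_cardQuot, Set.singleton_zero, Ideal.span_zero, cardQuot_bot]

@[simp] theorem nuA'_one : nuA' (1 : A) = 1 := by
  rw [nuA'_eq_cardQuot, Ideal.span_singleton_one]
  exact cardQuot_top A A

theorem nuA'_mul (x y : A) : nuA' (x * y) = nuA' x * nuA' y := by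
  rw [nuA'_eq_cardQuot, ← Ideal.span_singleton_mul_span_singleton, cardQuot_mul']
  rfl

theorem nuA'_neg (x : A) : nuA' (-x) = nuA' x := by
  rw [nuA'_eq_cardQuot, Ideal.span_singleton_neg]; rfl

theorem nuA'_associated {x y : A} (h : Associated x y) : nuA' x = nuA' y := by
  rw [nuA'_eq_cardQuot, (Ideal.span_singleton_eq_span_singleton).mpr h]; rfl

theorem nuA'_sum_le {C : ℕ} (hC : 0 < C)
    (hqt : ∀ x y : A, nuA' (x + y) ≤ C * (nuA' x + nuA' y))
    {γ : Type*} (s : Finset γ) (f : γ → A) :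
    nuA' (∑ i ∈ s, f i) ≤ C ^ s.card * ∑ i ∈ s, nuA' (f i) := by
  classical
  induction s using Finset.cons_induction with
  | empty => simp
  | cons a s ha ih =>
    rw [Finset.sum_cons, Finset.sum_cons, Finset.card_cons]
    have h1 : 1 ≤ C ^ s.card := Nat.one_le_pow _ _ hC
    calc nuA' (f a + ∑ i ∈ s, f i) ≤ C * (nuA' (f a) + nuA' (∑ i ∈ s, f i)) := hqt _ _
    _ ≤ C * (nuA' (f a) + C ^ s.card * ∑ i ∈ s, nuA' (f i)) :=
        Nat.mul_le_mul_left _ (Nat.add_le_add_left ih _)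
    _ = C * nuA' (f a) + C ^ s.card * C * ∑ i ∈ s, nuA' (f i) := by ring
    _ ≤ C ^ s.card * C * nuA' (f a) + C ^ s.card * C * ∑ i ∈ s, nuA' (f i) := by
        refine Nat.add_le_add_right ?_ _
        calc C * nuA' (f a) = 1 * (C * nuA' (f a)) := by ring
        _ ≤ C ^ s.card * (C * nuA' (f a)) := Nat.mul_le_mul_right _ h1
        _ = C ^ s.card * C * nuA' (f a) := by ring
    _ = C ^ (s.card + 1) * (nuA' (f a) + ∑ i ∈ s, nuA' (f i)) := by rw [pow_succ]; ring

theorem nuA'_prod {γ : Type*} (s : Finset γ) (f : γ → A) :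
    nuA' (∏ i ∈ s, f i) = ∏ i ∈ s, nuA' (f i) := by
  classical
  induction s using Finset.cons_induction with
  | empty => simp
  | cons a s ha ih => rw [Finset.prod_cons, Finset.prod_cons, nuA'_mul, ih]
end Nu

section Smith
variable {A B : Type*} [CommRing A] [IsDomain A] [IsPrincipalIdealRing A] [Infinite A]
  [CommRing B] [IsDomain B] [Algebra A B]
  {ι : Type*} [Fintype ι] (b : Module.Basis ι A B)

theorem cardQuot_eq_nuA_prod_smith (I : Ideal B) (hI : I ≠ ⊥) :
    cardQuot I = ∏ i, nuA' (I.smithCoeffs b hI i) := by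
  rw [cardQuot_apply, Nat.card_congr (I.quotientEquivPiSpan b hI).toEquiv, Nat.card_pi]
  rfl

include b in
theorem finiteQuot (hfq : ∀ J : Ideal A, J ≠ ⊥ → Finite (A ⧸ J)) (I : Ideal B) (hI : I ≠ ⊥) :
    Finite (B ⧸ I) := by
  have : ∀ i, Finite (A ⧸ Ideal.span {I.smithCoeffs b hI i}) := fun i =>
    hfq _ (by simp [Ideal.span_singleton_eq_bot, Ideal.smithCoeffs_ne_zero])
  exact Finite.of_equiv _ (I.quotientEquivPiSpan b hI).toEquiv.symm

theorem algebraMap_prod_smith_mem (I : Ideal B) (hI : I ≠ ⊥) :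
    algebraMap A B (∏ i, I.smithCoeffs b hI i) ∈ I := by
  set μ := ∏ i, I.smithCoeffs b hI i with hμ
  let e := I.quotientEquivPiSpan b hI
  rw [← Ideal.Quotient.eq_zero_iff_mem]
  apply e.injective
  rw [map_zero]
  have h1 : (Ideal.Quotient.mk I) ((algebraMap A B) μ) = μ • (Ideal.Quotient.mk I) 1 := by
    rw [Algebra.algebraMap_eq_smul_one]
    rfl
  rw [h1, map_smul]
  ext i
  rw [Pi.smul_apply, Pi.zero_apply]
  obtain ⟨z, hz⟩ := Ideal.Quotient.mk_surjective (e ((Ideal.Quotient.mk I) 1) i)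
  have h2 : μ • (Ideal.Quotient.mk (Ideal.span {I.smithCoeffs b hI i}) z)
      = Ideal.Quotient.mk _ (μ * z) := rfl
  rw [← hz, h2, Ideal.Quotient.eq_zero_iff_mem]
  exact Ideal.mul_mem_right z _ (Ideal.mem_span_singleton.mpr
    (Finset.dvd_prod_of_mem _ (Finset.mem_univ i)))

include b in
theorem nuA'_det_equiv (I : Ideal B) (hI : I ≠ ⊥) (e : B ≃ₗ[A] I) :
    nuA' (LinearMap.det ((Submodule.subtype I).restrictScalars A ∘ₗ (e : B →ₗ[A] I)))
      = cardQuot I := by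
  letI := Classical.decEq ι
  let a := I.smithCoeffs b hI
  let b' := I.ringBasis b hI
  let ab := I.selfBasis b hI
  have ab_eq := I.selfBasis_def b hI
  let e' : B ≃ₗ[A] I := b'.equiv ab (Equiv.refl _)
  let f : B →ₗ[A] B := ((Submodule.subtype I).restrictScalars A).comp (e' : B →ₗ[A] I)
  have f_apply : ∀ x, f x = b'.equiv ab (Equiv.refl _) x := fun x => rfl
  have assoc : Associated
      (LinearMap.det ((Submodule.subtype I).restrictScalars A ∘ₗ (e : B →ₗ[A] I)))
      (LinearMap.det f) := LinearMap.associated_det_comp_equiv _ _ _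
  rw [nuA'_associated assoc]
  have ha : ∀ i, f (b' i) = a i • b' i := by
    intro i; rw [f_apply, b'.equiv_apply, Equiv.refl_apply, ab_eq]
  have hmat : LinearMap.toMatrix b' b' f = Matrix.diagonal a := by
    ext i j
    rw [LinearMap.toMatrix_apply, ha, LinearEquiv.map_smul, Module.Basis.repr_self, Finsupp.smul_single,
      smul_eq_mul, mul_one]
    by_cases h : i = j
    · rw [h, Matrix.diagonal_apply_eq, Finsupp.single_eq_same]
    · rw [Matrix.diagonal_apply_ne _ h, Finsupp.single_eq_of_ne h]
  rw [← LinearMap.det_toMatrix b', hmat, Matrix.det_diagonal, nuA'_prod]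
  exact (cardQuot_eq_nuA_prod_smith b I hI).symm

include b in
theorem cardQuot_span_singleton_eq (β : B) (hβ : β ≠ 0) :
    cardQuot (Ideal.span {β}) = nuA' (LinearMap.det (Algebra.lmul A B β)) := by
  have hI : Ideal.span {β} ≠ ⊥ := by simpa [Ideal.span_singleton_eq_bot] using hβ
  rw [← nuA'_det_equiv b _ hI (b.equiv (Ideal.basisSpanSingleton b hβ) (Equiv.refl _))]
  congr 2
  refine b.ext fun i => ?_
  simp

include b in
theorem det_bound {C : ℕ} (hC : 0 < C)
    (hqt : ∀ x y : A, nuA' (x + y) ≤ C * (nuA' x + nuA' y)) :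
    ∃ K : ℕ, 0 < K ∧ ∀ (d : ι → A) (D : ℕ), (∀ i, nuA' (d i) ≤ D) →
      nuA' (LinearMap.det (Algebra.lmul A B (∑ i, d i • b i)))
        ≤ K * D ^ (Fintype.card ι) := by
  classical
  set n := Fintype.card ι with hn
  set G : ι → ι → ι → A := fun i j k => LinearMap.toMatrix b b (Algebra.lmul A B (b i)) j k with hG
  set Γ : ℕ := (∑ i, ∑ j, ∑ k, nuA' (G i j k)) + 1 with hΓdef
  have hΓ : ∀ i j k, nuA' (G i j k) ≤ Γ := by
    intro i j k
    have : nuA' (G i j k) ≤ ∑ i, ∑ j, ∑ k, nuA' (G i j k) := by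
      refine le_trans ?_ (Finset.single_le_sum (f := fun i => ∑ j, ∑ k, nuA' (G i j k))
        (fun _ _ => Nat.zero_le _) (Finset.mem_univ i))
      refine le_trans ?_ (Finset.single_le_sum (f := fun j => ∑ k, nuA' (G i j k))
        (fun _ _ => Nat.zero_le _) (Finset.mem_univ j))
      exact Finset.single_le_sum (f := fun k => nuA' (G i j k))
        (fun _ _ => Nat.zero_le _) (Finset.mem_univ k)
    omega
  set E : ℕ := C ^ n * (n * Γ) with hE
  set P : ℕ := Fintype.card (Equiv.Perm ι) with hP
  refine ⟨C ^ P * P * E ^ n + 1, Nat.succ_pos _, fun d D hd => ?_⟩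
  set β := ∑ i, d i • b i with hβ
  set M := LinearMap.toMatrix b b (Algebra.lmul A B β) with hM
  have hMentry : ∀ j k, M j k = ∑ i, d i * G i j k := by
    intro j k
    have hMs : M = ∑ i, d i • LinearMap.toMatrix b b (Algebra.lmul A B (b i)) := by
      rw [hM, hβ]
      show ((LinearMap.toMatrix b b : (B →ₗ[A] B) →ₗ[A] Matrix ι ι A) ∘ₗ LinearMap.mul A B)
        (∑ i, d i • b i) = _
      rw [map_sum]
      exact Finset.sum_congr rfl fun i _ => map_smul _ _ _
    rw [hMs]
    simp only [Finset.sum_apply, Matrix.sum_apply, Matrix.smul_apply, smul_eq_mul]; rfl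
  have hMbound : ∀ j k, nuA' (M j k) ≤ E * D := by
    intro j k
    rw [hMentry j k]
    calc nuA' (∑ i, d i * G i j k) ≤ C ^ n * ∑ i, nuA' (d i * G i j k) := by
          simpa [hn] using nuA'_sum_le hC hqt Finset.univ (fun i => d i * G i j k)
    _ ≤ C ^ n * ∑ _i : ι, D * Γ := by
          refine Nat.mul_le_mul_left _ (Finset.sum_le_sum fun i _ => ?_)
          rw [nuA'_mul]
          exact Nat.mul_le_mul (hd i) (hΓ i _ _)
    _ = E * D := by simp [hE]; ring
  have hdet : LinearMap.det (Algebra.lmul A B β) = M.det := (LinearMap.det_toMatrix b _).symm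
  rw [hdet, Matrix.det_apply]
  calc nuA' (∑ σ : Equiv.Perm ι, Equiv.Perm.sign σ • ∏ i, M (σ i) i)
      ≤ C ^ P * ∑ σ : Equiv.Perm ι, nuA' (Equiv.Perm.sign σ • ∏ i, M (σ i) i) := by
        simpa [hP] using nuA'_sum_le hC hqt Finset.univ
          (fun σ : Equiv.Perm ι => Equiv.Perm.sign σ • ∏ i, M (σ i) i)
  _ ≤ C ^ P * ∑ _σ : Equiv.Perm ι, (E * D) ^ n := by
        refine Nat.mul_le_mul_left _ (Finset.sum_le_sum fun σ _ => ?_)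
        have hsign : nuA' (Equiv.Perm.sign σ • ∏ i, M (σ i) i) = nuA' (∏ i, M (σ i) i) := by
          rcases Int.units_eq_one_or (Equiv.Perm.sign σ) with h | h <;> rw [h] <;> simp [nuA'_neg]
        rw [hsign, nuA'_prod]
        calc ∏ i, nuA' (M (σ i) i) ≤ ∏ _i : ι, (E * D) :=
              Finset.prod_le_prod' fun i _ => hMbound _ _
        _ = (E * D) ^ n := by rw [Finset.prod_const, Finset.card_univ]
  _ ≤ (C ^ P * P * E ^ n + 1) * D ^ n := by
        simp only [Finset.sum_const, Finset.card_univ, smul_eq_mul, mul_pow]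
        nlinarith [Nat.zero_le (C ^ P * P * E ^ n), Nat.zero_le (D ^ n)]
end Smith

theorem exists_good_m (q n : ℕ) (hq : 0 < q) (hn : 0 < n) :
    ∃ m, 0 < m ∧ q < m ^ n ∧ m ^ n ≤ 2 ^ n * q := by
  have hex : ∃ m : ℕ, q < m ^ n := ⟨q + 1, lt_of_lt_of_le (Nat.lt_succ_self q)
    (le_self_pow₀ (by omega) (by omega))⟩
  classical
  let m := Nat.find hex
  have hm : q < m ^ n := Nat.find_spec hex
  have hm2 : 2 ≤ m := by
    rcases Nat.lt_or_ge m 2 with h | h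
    · exfalso
      have h1 : m ^ n ≤ 1 := by
        calc m ^ n ≤ 1 ^ n := Nat.pow_le_pow_left (by omega) n
        _ = 1 := one_pow n
      omega
    · exact h
  have hmin : (m - 1) ^ n ≤ q := by
    have := Nat.find_min hex (m := m - 1) (by omega)
    omega
  refine ⟨m, by omega, hm, ?_⟩
  calc m ^ n ≤ (2 * (m - 1)) ^ n := Nat.pow_le_pow_left (by omega) n
  _ = 2 ^ n * (m - 1) ^ n := by rw [mul_pow]
  _ ≤ 2 ^ n * q := Nat.mul_le_mul_left _ hmin

/-- Let `A` be a basic PID and `B` a Dedekind domain that is a finitely generated free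
`A`-module. Then the ideal class group of `B` is finite. -/
theorem classGroup_finite_of_classG
    (A : Type*) [CommRing A] [IsDomain A] [IsPrincipalIdealRing A]
    (hnf : ¬ IsField A)
    (hfq : ∀ I : Ideal A, I ≠ ⊥ → Finite (A ⧸ I))
    (hsmall : ∃ c : ℕ, 0 < c ∧ ∀ m : ℕ, 0 < m →
      m ≤ {x : A | Nat.card (A ⧸ Ideal.span {x}) ≤ c * m}.ncard)
    (hqt : ∃ C : ℕ, 0 < C ∧ ∀ x y : A,
      Nat.card (A ⧸ Ideal.span {x + y}) ≤
        C * (Nat.card (A ⧸ Ideal.span {x}) + Nat.card (A ⧸ Ideal.span {y})))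
    (B : Type*) [CommRing B] [IsDedekindDomain B] [Algebra A B]
    [Module.Finite A B] [Module.Free A B] :
    Finite (ClassGroup B) := by
  classical
  obtain ⟨c, hc, hsmall⟩ := hsmall
  obtain ⟨C, hC, hqt⟩ := hqt
  have hqt' : ∀ x y : A, nuA' (x + y) ≤ C * (nuA' x + nuA' y) := hqt
  have hsmall' : ∀ m : ℕ, 0 < m → m ≤ {x : A | nuA' x ≤ c * m}.ncard := hsmall
  haveI : Infinite A := by
    rw [← not_finite_iff_infinite]
    intro h
    exact hnf (Finite.isField_of_domain A)
  haveI : Nontrivial B := inferInstance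
  have hinj : Function.Injective (algebraMap A B) := FaithfulSMul.algebraMap_injective A B
  haveI : Infinite B := Infinite.of_injective _ hinj
  let b : Module.Basis (Module.Free.ChooseBasisIndex A B) A B := Module.Free.chooseBasis A B
  haveI : Nonempty (Module.Free.ChooseBasisIndex A B) := Module.Basis.index_nonempty b
  set n := Fintype.card (Module.Free.ChooseBasisIndex A B) with hn
  have hnpos : 0 < n := Fintype.card_pos
  obtain ⟨K, hK, hKb⟩ := det_bound b hC hqt'
  set M := K * (2 * C * c) ^ n * 2 ^ n with hMdef
  have hMpos : 0 < M := by positivity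
  -- finiteness of small-norm sets in A
  have hfinset : ∀ m : ℕ, 0 < m → {x : A | nuA' x ≤ c * m}.Finite := by
    intro m hm
    by_contra h
    have h0 := Set.Infinite.ncard h
    have h2 := hsmall' m hm
    omega
  have hsmallfin : ∀ m : ℕ, 0 < m → ∃ s : Finset A, (∀ x ∈ s, nuA' x ≤ c * m) ∧ m ≤ s.card := by
    intro m hm
    have h1 := hsmall' m hm
    have hfin := hfinset m hm
    refine ⟨hfin.toFinset, fun x hx => ?_, ?_⟩
    · simpa using (hfin.mem_toFinset.mp hx)
    · rwa [Set.ncard_eq_toFinset_card _ hfin] at h1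
  -- key step: every nonzero ideal contains a nonzero element of comparably small norm
  have key : ∀ I : Ideal B, I ≠ ⊥ →
      ∃ β ∈ I, β ≠ 0 ∧ Submodule.cardQuot (Ideal.span {β}) ≤ M * Submodule.cardQuot I := by
    intro I hI
    haveI : Finite (B ⧸ I) := finiteQuot b hfq I hI
    haveI : Fintype (B ⧸ I) := Fintype.ofFinite _
    set q := Submodule.cardQuot I with hq
    have hqpos : 0 < q := by rw [hq, Submodule.cardQuot_apply]; exact Nat.card_pos
    obtain ⟨m, hm, hqm, hm2⟩ := exists_good_m q n hqpos hnpos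
    obtain ⟨s, hs1, hs2⟩ := hsmallfin m hm
    have hcard : (Finset.univ : Finset (B ⧸ I)).card <
        (Fintype.piFinset (fun _ : Module.Free.ChooseBasisIndex A B => s)).card := by
      rw [Fintype.card_piFinset]
      calc (Finset.univ : Finset (B ⧸ I)).card = q := by
            rw [Finset.card_univ, ← Nat.card_eq_fintype_card]; rfl
      _ < m ^ n := hqm
      _ ≤ ∏ _i : Module.Free.ChooseBasisIndex A B, s.card := by
            rw [Finset.prod_const, Finset.card_univ, ← hn]
            exact Nat.pow_le_pow_left hs2 n
    obtain ⟨d, hd, d', hd', hne, heq⟩ := Finset.exists_ne_map_eq_of_card_lt_of_maps_to hcard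
      (f := fun d : Module.Free.ChooseBasisIndex A B → A =>
        Ideal.Quotient.mk I (∑ i, d i • b i)) (fun _ _ => Finset.mem_univ _)
    set β := ∑ i, (d i - d' i) • b i with hβ
    have hβeq : β = (∑ i, d i • b i) - (∑ i, d' i • b i) := by
      rw [← Finset.sum_sub_distrib]; exact Finset.sum_congr rfl fun i _ => sub_smul _ _ _
    have hβI : β ∈ I := by
      rw [hβeq]
      exact Ideal.Quotient.eq.mp heq
    have hβ0 : β ≠ 0 := by
      intro h0
      apply hne
      have h1 := b.repr_sum_self (fun i => d i - d' i)
      rw [← hβ, h0, map_zero] at h1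
      funext i
      have := congrFun h1.symm i
      simpa [sub_eq_zero] using this
    have hDbound : ∀ i, nuA' (d i - d' i) ≤ 2 * C * c * m := by
      intro i
      have h1 : nuA' (d i) ≤ c * m := hs1 _ (Fintype.mem_piFinset.mp hd i)
      have h2 : nuA' (d' i) ≤ c * m := hs1 _ (Fintype.mem_piFinset.mp hd' i)
      calc nuA' (d i - d' i) = nuA' (d i + (- d' i)) := by rw [sub_eq_add_neg]
      _ ≤ C * (nuA' (d i) + nuA' (-(d' i))) := hqt' _ _
      _ = C * (nuA' (d i) + nuA' (d' i)) := by rw [nuA'_neg]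
      _ ≤ C * (c * m + c * m) := Nat.mul_le_mul_left _ (Nat.add_le_add h1 h2)
      _ = 2 * C * c * m := by ring
    refine ⟨β, hβI, hβ0, ?_⟩
    calc Submodule.cardQuot (Ideal.span {β}) = nuA' (LinearMap.det (Algebra.lmul A B β)) :=
          cardQuot_span_singleton_eq b β hβ0
    _ ≤ K * (2 * C * c * m) ^ n := hKb _ _ hDbound
    _ = K * (2 * C * c) ^ n * m ^ n := by rw [mul_pow]; ring
    _ ≤ K * (2 * C * c) ^ n * (2 ^ n * q) := Nat.mul_le_mul_left _ hm2
    _ = M * q := by rw [hMdef]; ring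
  -- finiteness of the set of ideals of norm at most M
  have hTfin : {α : A | α ≠ 0 ∧ nuA' α ≤ M}.Finite := by
    refine (hfinset (M + 1) (by omega)).subset ?_
    intro x hx
    have : M ≤ c * (M + 1) := by nlinarith
    exact le_trans hx.2 this
  have hSfin : {J : Ideal B | J ≠ ⊥ ∧ Submodule.cardQuot J ≤ M}.Finite := by
    have hsub : {J : Ideal B | J ≠ ⊥ ∧ Submodule.cardQuot J ≤ M} ⊆
        ⋃ α ∈ {α : A | α ≠ 0 ∧ nuA' α ≤ M}, {J : Ideal B | algebraMap A B α ∈ J} := by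
      rintro J ⟨hJ, hJM⟩
      have hμ0 : (∏ i, J.smithCoeffs b hJ i) ≠ 0 :=
        Finset.prod_ne_zero_iff.mpr (fun i _ => Ideal.smithCoeffs_ne_zero b J hJ i)
      have hμν : nuA' (∏ i, J.smithCoeffs b hJ i) = Submodule.cardQuot J := by
        rw [nuA'_prod, ← cardQuot_eq_nuA_prod_smith b J hJ]
      exact Set.mem_biUnion (show (∏ i, J.smithCoeffs b hJ i) ∈ _ from ⟨hμ0, by omega⟩)
        (algebraMap_prod_smith_mem b J hJ)
    refine Set.Finite.subset (Set.Finite.biUnion hTfin ?_) hsub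
    rintro α ⟨hα0, -⟩
    have hx : algebraMap A B α ≠ 0 := fun h => hα0 (hinj (by rw [h, map_zero]))
    haveI : Finite (B ⧸ Ideal.span {algebraMap A B α}) :=
      finiteQuot b hfq _ (by simpa [Ideal.span_singleton_eq_bot] using hx)
    haveI : Finite (Ideal (B ⧸ Ideal.span {algebraMap A B α})) :=
      Finite.of_injective (fun I => (I : Set (B ⧸ Ideal.span {algebraMap A B α}))) SetLike.coe_injective
    have e1 : ∀ J : Ideal B, algebraMap A B α ∈ J →
        (J.map (Ideal.Quotient.mk (Ideal.span {algebraMap A B α}))).comap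
          (Ideal.Quotient.mk (Ideal.span {algebraMap A B α})) = J := by
      intro J hJ
      rw [Ideal.comap_map_of_surjective _ Ideal.Quotient.mk_surjective,
        ← RingHom.ker_eq_comap_bot, Ideal.mk_ker, sup_eq_left]
      exact Ideal.span_le.mpr (Set.singleton_subset_iff.mpr hJ)
    refine Set.Finite.of_finite_image (f := fun J : Ideal B =>
      J.map (Ideal.Quotient.mk (Ideal.span {algebraMap A B α}))) (Set.toFinite _) ?_
    intro J1 h1 J2 h2 hJeq
    rw [← e1 J1 h1, ← e1 J2 h2]
    exact congrArg _ hJeq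
  -- conclusion
  haveI : Finite ↥{J : Ideal B | J ≠ ⊥ ∧ Submodule.cardQuot J ≤ M} := hSfin
  refine Finite.of_surjective
    (f := fun J : ↥{J : Ideal B | J ≠ ⊥ ∧ Submodule.cardQuot J ≤ M} =>
      ClassGroup.mk0 ⟨J.1, mem_nonZeroDivisors_iff_ne_zero.mpr J.2.1⟩) ?_
  intro X
  obtain ⟨I0, hI0⟩ := ClassGroup.mk0_surjective (X⁻¹)
  have hIne : I0.1 ≠ ⊥ := mem_nonZeroDivisors_iff_ne_zero.mp I0.2
  obtain ⟨β, hβI, hβ0, hβb⟩ := key I0.1 hIne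
  have hspanne : Ideal.span {β} ≠ ⊥ := by simpa [Ideal.span_singleton_eq_bot] using hβ0
  obtain ⟨J, hJ⟩ : I0.1 ∣ Ideal.span {β} :=
    Ideal.dvd_iff_le.mpr (Ideal.span_le.mpr (Set.singleton_subset_iff.mpr hβI))
  have hJ0 : J ≠ ⊥ := by
    rintro rfl
    rw [Ideal.mul_bot] at hJ
    exact hspanne hJ
  haveI : Finite (B ⧸ I0.1) := finiteQuot b hfq _ hIne
  have hqpos : 0 < Submodule.cardQuot I0.1 := by
    rw [Submodule.cardQuot_apply]; exact Nat.card_pos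
  have hmul : Submodule.cardQuot (Ideal.span {β})
      = Submodule.cardQuot I0.1 * Submodule.cardQuot J := by rw [hJ, cardQuot_mul']
  have hJM : Submodule.cardQuot J ≤ M := by
    rw [hmul] at hβb
    have h3 : Submodule.cardQuot J * Submodule.cardQuot I0.1
        ≤ M * Submodule.cardQuot I0.1 := by
      calc Submodule.cardQuot J * Submodule.cardQuot I0.1
          = Submodule.cardQuot I0.1 * Submodule.cardQuot J := Nat.mul_comm _ _
      _ ≤ M * Submodule.cardQuot I0.1 := hβb
    exact Nat.le_of_mul_le_mul_right h3 hqpos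
  refine ⟨⟨J, hJ0, hJM⟩, ?_⟩
  have hJnz : J ∈ nonZeroDivisors (Ideal B) := mem_nonZeroDivisors_iff_ne_zero.mpr hJ0
  have hspan1 : ClassGroup.mk0 ⟨Ideal.span {β},
      mem_nonZeroDivisors_iff_ne_zero.mpr hspanne⟩ = 1 :=
    (ClassGroup.mk0_eq_one_iff _).mpr ⟨⟨β, rfl⟩⟩
  have heqsub : (⟨Ideal.span {β}, mem_nonZeroDivisors_iff_ne_zero.mpr hspanne⟩ :
      (nonZeroDivisors (Ideal B))) = I0 * ⟨J, hJnz⟩ := Subtype.ext hJ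
  have h4 : ClassGroup.mk0 (I0 * ⟨J, hJnz⟩) = ClassGroup.mk0 I0 * ClassGroup.mk0 ⟨J, hJnz⟩ :=
    MonoidHom.map_mul _ _ _
  rw [heqsub, h4, hI0] at hspan1
  exact (inv_mul_eq_one.mp hspan1).symm
end

section
/- Let D be a Dedekind domain with finite ideal class group. Then any overring R of D (a ring with D ⊆ R ⊆ Frac(D)) is a Dedekind domain whose ideal class group is finite; indeed, R is a localization of D at a multiplicative subset and Cl(R) is a quotient of Cl(D). -/
set_option linter.unusedSectionVars false

open FractionalIdeal nonZeroDivisors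

section Aux

variable {D : Type*} [CommRing D] [IsDedekindDomain D]
  {K : Type*} [Field K] [Algebra D K] [IsFractionRing D K] (R : Subalgebra D K)

/-- Elements of `D` that become units in the overring `R`. -/
def overringSubmonoid : Submonoid D :=
  Submonoid.comap (algebraMap D ↥R) (IsUnit.submonoid ↥R)

lemma mem_overringSubmonoid {d : D} :
    d ∈ overringSubmonoid R ↔ IsUnit (algebraMap D ↥R d) := Iff.rfl

lemma coe_algebraMap_overring (d : D) :
    ((algebraMap D ↥R d : ↥R) : K) = algebraMap D K d := rfl

lemma overringSubmonoid_le : overringSubmonoid R ≤ D⁰ := by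
  intro d hd
  rw [mem_overringSubmonoid] at hd
  refine mem_nonZeroDivisors_of_ne_zero fun h => ?_
  rw [h, _root_.map_zero] at hd
  exact not_isUnit_zero hd

variable [Finite (ClassGroup D)]

lemma overring_key (z : ↥R) :
    ∃ x : D, ∃ s : overringSubmonoid R,
      z * algebraMap D ↥R s = algebraMap D ↥R x := by
  classical
  set ζ : K := (z : K) with hζ
  -- the fractional ideal `D + ζ D`
  set J : FractionalIdeal D⁰ K := 1 + spanSingleton D⁰ ζ with hJ
  have hJ1 : (1 : FractionalIdeal D⁰ K) ≤ J := by
    rw [hJ, ← FractionalIdeal.sup_eq_add]; exact le_sup_left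
  have hJ0 : J ≠ 0 := fun h => by
    simpa [h] using hJ1.trans_eq h
  -- every element of `J` lies in `R`
  have hJR : ∀ y ∈ J, y ∈ R := by
    intro y hy
    rw [hJ] at hy
    obtain ⟨a, ha, b, hb, rfl⟩ := (FractionalIdeal.mem_add _ _ _).mp hy
    obtain ⟨d, rfl⟩ := (FractionalIdeal.mem_one_iff _).mp ha
    obtain ⟨e, rfl⟩ := (FractionalIdeal.mem_spanSingleton _).mp hb
    exact R.add_mem (R.algebraMap_mem d) (R.smul_mem z.2 e)
  -- the inverse of `J` is an integral ideal
  have hJinv : J⁻¹ ≤ 1 := by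
    calc J⁻¹ = J⁻¹ * 1 := (mul_one _).symm
    _ ≤ J⁻¹ * J := mul_le_mul_right hJ1 _
    _ = 1 := by rw [mul_comm]; exact mul_inv_cancel₀ hJ0
  obtain ⟨I, hI⟩ := FractionalIdeal.le_one_iff_exists_coeIdeal.mp hJinv
  have hIne : I ≠ 0 := by
    rintro rfl
    exact inv_ne_zero hJ0 (by simpa using hI.symm)
  have hI0 : I ∈ (Ideal D)⁰ := mem_nonZeroDivisors_iff_ne_zero.mpr hIne
  -- some power of `I` is principal
  haveI := Fintype.ofFinite (ClassGroup D)
  set n := Fintype.card (ClassGroup D) with hn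
  have hnpos : 0 < n := Fintype.card_pos
  have hprin : (I ^ n).IsPrincipal := by
    have h1 : ClassGroup.mk0 (⟨I, hI0⟩ : (Ideal D)⁰) ^ n = 1 := pow_card_eq_one
    rw [← map_pow] at h1
    have : ((⟨I, hI0⟩ : (Ideal D)⁰) ^ n : (Ideal D)⁰) =
        ⟨I ^ n, pow_mem hI0 n⟩ := by
      ext; simp
    rw [this] at h1
    exact (ClassGroup.mk0_eq_one_iff _).mp h1
  obtain ⟨b, hb⟩ := hprin
  have hbne : b ≠ 0 := by
    rintro rfl
    rw [Ideal.submodule_span_eq, Ideal.span_singleton_eq_bot.mpr rfl] at hb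
    exact pow_ne_zero n hIne hb
  set β : K := algebraMap D K b with hβ
  have hβne : β ≠ 0 := by
    intro h
    exact hbne (IsFractionRing.to_map_eq_zero_iff.mp h)
  -- `b ∈ I`
  have hbI : b ∈ I := by
    have : b ∈ I ^ n := by
      rw [hb, Ideal.submodule_span_eq]
      exact Ideal.mem_span_singleton_self b
    exact Ideal.pow_le_self hnpos.ne' this
  -- `ζ * β ∈ D`
  have hmul : ζ * β ∈ (1 : FractionalIdeal D⁰ K) := by
    have h1 : ζ ∈ J := by
      rw [hJ]
      exact (FractionalIdeal.mem_add _ _ _).mpr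
        ⟨0, zero_mem _, ζ, FractionalIdeal.mem_spanSingleton_self _ _, zero_add ζ⟩
    have h2 : β ∈ (I : FractionalIdeal D⁰ K) :=
      (FractionalIdeal.mem_coeIdeal _).mpr ⟨b, hbI, rfl⟩
    have h3 : ζ * β ∈ J * J⁻¹ := FractionalIdeal.mul_mem_mul h1 (hI ▸ h2)
    rwa [mul_inv_cancel₀ hJ0] at h3
  -- `β⁻¹ ∈ R`
  have hpow : (J ^ n : FractionalIdeal D⁰ K) = spanSingleton D⁰ β⁻¹ := by
    have h1 : ((I ^ n : Ideal D) : FractionalIdeal D⁰ K) = spanSingleton D⁰ β := by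
      rw [hb, Ideal.submodule_span_eq, FractionalIdeal.coeIdeal_span_singleton]
    rw [FractionalIdeal.coeIdeal_pow, hI, inv_pow] at h1
    rw [← FractionalIdeal.spanSingleton_inv, ← h1, inv_inv]
  have hβinvR : β⁻¹ ∈ R := by
    have hmem : β⁻¹ ∈ (J ^ n : FractionalIdeal D⁰ K) := by
      rw [hpow]; exact FractionalIdeal.mem_spanSingleton_self _ _
    clear hpow
    -- show `J ^ m ⊆ R` for `1 ≤ m` by induction
    have key : ∀ m : ℕ, ∀ y ∈ (J ^ (m + 1) : FractionalIdeal D⁰ K), y ∈ R := by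
      intro m
      induction m with
      | zero => simpa using hJR
      | succ m ih =>
        intro y hy
        rw [pow_succ] at hy
        have : y ∈ ((J ^ (m + 1) : FractionalIdeal D⁰ K) : Submodule D K) *
            ((J : FractionalIdeal D⁰ K) : Submodule D K) := by
          rwa [← FractionalIdeal.coe_mul]
        refine Submodule.mul_induction_on this (fun a ha c hc => R.mul_mem (ih a ha) (hJR c hc))
          (fun a c ha hc => R.add_mem ha hc)
    obtain ⟨m, hm⟩ : ∃ m, n = m + 1 := ⟨n - 1, (Nat.succ_pred_eq_of_pos hnpos).symm⟩
    rw [hm] at hmem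
    exact key _ _ hmem
  -- conclude
  obtain ⟨x, hx⟩ := (FractionalIdeal.mem_one_iff _).mp hmul
  have hsb : b ∈ overringSubmonoid R := by
    rw [mem_overringSubmonoid]
    refine isUnit_iff_exists_inv.mpr ⟨⟨β⁻¹, hβinvR⟩, ?_⟩
    ext
    push_cast [coe_algebraMap_overring]
    exact mul_inv_cancel₀ hβne
  refine ⟨x, ⟨b, hsb⟩, ?_⟩
  ext
  push_cast [coe_algebraMap_overring]
  rw [← hx]

end Aux

section Aux2

variable {D : Type*} [CommRing D] [IsDedekindDomain D]
  {K : Type*} [Field K] [Algebra D K] [IsFractionRing D K] (R : Subalgebra D K)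
  [Finite (ClassGroup D)]

lemma overring_isLocalization : IsLocalization (overringSubmonoid R) ↥R := by
  refine (isLocalization_iff _ _).mpr ⟨?_, ?_, ?_⟩
  · rintro ⟨s, hs⟩
    exact hs
  · intro z
    obtain ⟨x, s, h⟩ := overring_key R z
    exact ⟨⟨x, s⟩, h⟩
  · intro x y h
    refine ⟨1, ?_⟩
    have : algebraMap D K x = algebraMap D K y := by
      rw [← coe_algebraMap_overring R x, ← coe_algebraMap_overring R y, h]
    simpa using IsFractionRing.injective D K this

lemma overring_isDedekindDomain : IsDedekindDomain ↥R := by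
  haveI := overring_isLocalization R
  exact IsLocalization.isDedekindDomain D (overringSubmonoid_le R) ↥R

lemma overring_isFractionRing : IsFractionRing ↥R K := by
  haveI := overring_isLocalization R
  exact IsFractionRing.isFractionRing_of_isLocalization (overringSubmonoid R) ↥R K
    (overringSubmonoid_le R)

end Aux2

section Aux3

variable {D : Type*} [CommRing D] [IsDedekindDomain D]
  {K : Type*} [Field K] [Algebra D K] [IsFractionRing D K] (R : Subalgebra D K)
  [IsDedekindDomain ↥R] [IsFractionRing ↥R K]

lemma overring_nonZeroDivisors_le :
    D⁰ ≤ Submonoid.comap (algebraMap D ↥R) (↥R)⁰ := by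
  intro d hd
  refine mem_nonZeroDivisors_of_ne_zero fun h => ?_
  have : algebraMap D K d = 0 := by
    rw [← coe_algebraMap_overring R d, h]
    rfl
  exact nonZeroDivisors.ne_zero hd (IsFractionRing.to_map_eq_zero_iff.mp this)

lemma overring_map_eq :
    IsLocalization.map (S := K) K (algebraMap D ↥R) (overring_nonZeroDivisors_le R) =
      RingHom.id K := by
  apply IsLocalization.ringHom_ext D⁰
  ext x
  simp [← IsScalarTower.algebraMap_apply]

/-- Extension of fractional ideals from `D` to the overring `R`. -/
noncomputable def overringExtend : FractionalIdeal D⁰ K →* FractionalIdeal (↥R)⁰ K where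
  toFun I := I.extended K (overring_nonZeroDivisors_le R)
  map_one' := extended_one K (overring_nonZeroDivisors_le R)
  map_mul' I J := extended_mul K (overring_nonZeroDivisors_le R) I J

lemma coe_overringExtend (I : FractionalIdeal D⁰ K) :
    (overringExtend R I : Submodule ↥R K) = Submodule.span ↥R (I : Set K) := by
  show (I.extended K (overring_nonZeroDivisors_le R) : Submodule ↥R K) = _
  rw [coe_extended_eq_span, overring_map_eq]
  simp

lemma overringExtend_coeIdeal (I : Ideal D) :
    overringExtend R (I : FractionalIdeal D⁰ K) =
      ((I.map (algebraMap D ↥R) : Ideal ↥R) : FractionalIdeal (↥R)⁰ K) := by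
  apply coeToSubmodule_injective
  show ((overringExtend R (I : FractionalIdeal D⁰ K) : FractionalIdeal (↥R)⁰ K) :
    Submodule ↥R K) = _
  rw [coe_overringExtend]
  apply le_antisymm
  · rw [Submodule.span_le]
    rintro x hx
    obtain ⟨d, hd, rfl⟩ := (FractionalIdeal.mem_coeIdeal _).mp hx
    have : algebraMap D K d = algebraMap ↥R K (algebraMap D ↥R d) := by
      rw [← IsScalarTower.algebraMap_apply]
    rw [this]
    exact (FractionalIdeal.mem_coeIdeal _).mpr
      ⟨algebraMap D ↥R d, Ideal.mem_map_of_mem _ hd, rfl⟩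
  · rintro x hx
    obtain ⟨y, hy, rfl⟩ := (FractionalIdeal.mem_coeIdeal _).mp hx
    rw [Ideal.map, Ideal.span] at hy
    refine Submodule.span_induction ?_ ?_ ?_ ?_ hy
    · rintro y ⟨d, hd, rfl⟩
      apply Submodule.subset_span
      rw [← IsScalarTower.algebraMap_apply]
      exact SetLike.mem_coe.mpr ((FractionalIdeal.mem_coeIdeal _).mpr ⟨d, hd, rfl⟩)
    · simp
    · intro a b _ _ ha hb
      rw [_root_.map_add]
      exact Submodule.add_mem _ ha hb
    · intro r a _ ha
      rw [Algebra.smul_def, _root_.map_mul, ← Algebra.smul_def]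
      exact Submodule.smul_mem _ _ ha

lemma overringExtend_spanSingleton (x : K) :
    overringExtend R (spanSingleton D⁰ x) = spanSingleton (↥R)⁰ x := by
  apply coeToSubmodule_injective
  show ((overringExtend R (spanSingleton D⁰ x) : FractionalIdeal (↥R)⁰ K) :
    Submodule ↥R K) = _
  rw [coe_overringExtend]
  have h1 : ((spanSingleton D⁰ x : FractionalIdeal D⁰ K) : Set K) =
      ((Submodule.span D {x} : Submodule D K) : Set K) := by
    rw [← FractionalIdeal.coe_spanSingleton D⁰ x]
    rfl
  have h2 : ((spanSingleton (↥R)⁰ x : FractionalIdeal (↥R)⁰ K) : Submodule ↥R K) =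
      Submodule.span ↥R {x} := FractionalIdeal.coe_spanSingleton (↥R)⁰ x
  rw [h1]
  show Submodule.span (↥R) ((Submodule.span D {x} : Submodule D K) : Set K) =
    ((spanSingleton (↥R)⁰ x : FractionalIdeal (↥R)⁰ K) : Submodule ↥R K)
  rw [h2]
  exact Submodule.span_span_of_tower D ↥R {x}

end Aux3

section Aux4

variable {D : Type*} [CommRing D] [IsDedekindDomain D]
  {K : Type*} [Field K] [Algebra D K] [IsFractionRing D K] (R : Subalgebra D K)
  [IsDedekindDomain ↥R] [IsFractionRing ↥R K]

/-- The homomorphism from fractional ideals of `D` to the class group of the overring. -/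
noncomputable def overringClassHom : (FractionalIdeal D⁰ K)ˣ →* ClassGroup ↥R :=
  (ClassGroup.mk (R := ↥R) (K := K)).comp (Units.map (overringExtend R))

lemma overringClassHom_principal :
    ∀ u ∈ (toPrincipalIdeal D K).range, overringClassHom R u = 1 := by
  intro u hu
  obtain ⟨x, hx⟩ := mem_principal_ideals_iff.mp hu
  show ClassGroup.mk K (Units.map (overringExtend R) u) = 1
  rw [ClassGroup.mk_eq_one_iff (R := ↥R) (K := K)]
  have h1 : ((Units.map (overringExtend R) u : (FractionalIdeal (↥R)⁰ K)ˣ) :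
      FractionalIdeal (↥R)⁰ K) = spanSingleton (↥R)⁰ x := by
    show overringExtend R (u : FractionalIdeal D⁰ K) = _
    rw [← hx, overringExtend_spanSingleton]
  refine ⟨⟨x, ?_⟩⟩
  show (((Units.map (overringExtend R) u : (FractionalIdeal (↥R)⁰ K)ˣ) :
      FractionalIdeal (↥R)⁰ K) : Submodule ↥R K) = _
  rw [h1, FractionalIdeal.coe_spanSingleton]

/-- The induced homomorphism of class groups. -/
noncomputable def overringClassMap : ClassGroup D →* ClassGroup ↥R :=
  (QuotientGroup.lift (toPrincipalIdeal D K).range (overringClassHom R)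
    (overringClassHom_principal R)).comp (ClassGroup.equiv K (R := D)).toMonoidHom

lemma overringClassMap_surjective {S : Submonoid D} [IsLocalization S ↥R] :
    Function.Surjective (overringClassMap R) := by
  intro c
  obtain ⟨J, hJ⟩ := ClassGroup.mk0_surjective (R := ↥R) c
  set I : Ideal D := Ideal.comap (algebraMap D ↥R) (J : Ideal ↥R) with hIdef
  have hmap : Ideal.map (algebraMap D ↥R) I = (J : Ideal ↥R) :=
    IsLocalization.map_comap S ↥R (J : Ideal ↥R)
  have hJne : (J : Ideal ↥R) ≠ 0 := mem_nonZeroDivisors_iff_ne_zero.mp J.2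
  have hIne : I ≠ 0 := by
    rintro h
    rw [h] at hmap
    rw [show (0 : Ideal D) = ⊥ from rfl, Ideal.map_bot] at hmap
    exact hJne hmap.symm
  have hI0 : I ∈ (Ideal D)⁰ := mem_nonZeroDivisors_iff_ne_zero.mpr hIne
  set u : (FractionalIdeal D⁰ K)ˣ := FractionalIdeal.mk0 K ⟨I, hI0⟩ with hu
  have hmapu : Units.map (overringExtend R) u = FractionalIdeal.mk0 K J := by
    apply Units.ext
    show overringExtend R ((I : Ideal D) : FractionalIdeal D⁰ K) = ((J : Ideal ↥R) :
      FractionalIdeal (↥R)⁰ K)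
    rw [overringExtend_coeIdeal, hmap]
  have key : overringClassHom R u = c := by
    show ClassGroup.mk K (Units.map (overringExtend R) u) = c
    rw [hmapu, ClassGroup.mk_mk0]
    exact hJ
  refine ⟨(ClassGroup.equiv K (R := D)).symm ((u : (FractionalIdeal D⁰ K)ˣ) :
    (FractionalIdeal D⁰ K)ˣ ⧸ (toPrincipalIdeal D K).range), ?_⟩
  show (QuotientGroup.lift (toPrincipalIdeal D K).range (overringClassHom R)
      (overringClassHom_principal R)) ((ClassGroup.equiv K (R := D))
        ((ClassGroup.equiv K (R := D)).symm ((u : (FractionalIdeal D⁰ K)ˣ) :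
          (FractionalIdeal D⁰ K)ˣ ⧸ (toPrincipalIdeal D K).range))) = c
  rw [MulEquiv.apply_symm_apply]
  exact key

end Aux4

/-- Let `D` be a Dedekind domain with finite class group. Then any overring `R` of `D`
(a ring with `D ⊆ R ⊆ Frac(D)`) is a Dedekind domain with finite class group; indeed,
`R` is a localization of `D` at a multiplicative subset and `Cl(R)` is a quotient of
`Cl(D)`. -/
theorem overring_of_finite_classGroup
    (D : Type*) [CommRing D] [IsDedekindDomain D] [Finite (ClassGroup D)]
    (K : Type*) [Field K] [Algebra D K] [IsFractionRing D K]
    (R : Subalgebra D K) :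
    IsDedekindDomain ↥R ∧ Finite (ClassGroup ↥R) ∧
    (∃ S : Submonoid D, IsLocalization S ↥R) ∧
    ∃ φ : ClassGroup D →* ClassGroup ↥R, Function.Surjective φ := by
  haveI hloc := overring_isLocalization R
  haveI hded := overring_isDedekindDomain R
  haveI hfr := overring_isFractionRing R
  have hsurj : Function.Surjective (overringClassMap R) :=
    overringClassMap_surjective R (S := overringSubmonoid R)
  exact ⟨hded, Finite.of_surjective _ hsurj, ⟨overringSubmonoid R, hloc⟩,
    overringClassMap R, hsurj⟩
end

section
/- Let D be a Dedekind domain whose class group is torsion. Then every overring of D is a localization of D at some multiplicative subset. -/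
/-- Let `D` be a Dedekind domain whose class group is torsion. Then every overring of `D`
(a ring `R` with `D ⊆ R ⊆ Frac(D)`) is a localization of `D` at some multiplicative
subset (Davis–Gilmer–Ohm–Goldman). -/
theorem overring_isLocalization_of_torsion_classGroup
    (D : Type*) [CommRing D] [IsDedekindDomain D]
    (htor : Monoid.IsTorsion (ClassGroup D))
    (K : Type*) [Field K] [Algebra D K] [IsFractionRing D K]
    (R : Subalgebra D K) :
    ∃ S : Submonoid D, IsLocalization S ↥R := by
  classical
  -- the multiplicative set: elements of `D` that become units in `R`
  refine ⟨Submonoid.comap (algebraMap D ↥R) (IsUnit.submonoid ↥R), ?_⟩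
  have hcoe : ∀ d : D, ((algebraMap D ↥R d : ↥R) : K) = algebraMap D K d := fun d => rfl
  have hinj : Function.Injective (algebraMap D ↥R) := by
    intro a b hab
    apply IsFractionRing.injective D K
    rw [← hcoe a, ← hcoe b, hab]
  -- key lemma : every `x ∈ R` can be written with denominator in `S`
  have key : ∀ x : K, x ∈ R → ∃ a s : D,
      IsUnit (algebraMap D ↥R s) ∧ algebraMap D K s * x = algebraMap D K a := by
    intro x hx
    set J : FractionalIdeal (nonZeroDivisors D) K := 1 + FractionalIdeal.spanSingleton (nonZeroDivisors D) x with hJdef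
    have h1J : (1 : FractionalIdeal (nonZeroDivisors D) K) ≤ J := by rw [hJdef, ← FractionalIdeal.sup_eq_add]; exact le_sup_left
    have hxJ : x ∈ J := by
      have hle : FractionalIdeal.spanSingleton (nonZeroDivisors D) x ≤ J := by
        rw [hJdef, ← FractionalIdeal.sup_eq_add]; exact le_sup_right
      exact hle (FractionalIdeal.mem_spanSingleton_self (nonZeroDivisors D) x)
    have hJ0 : J ≠ 0 := by
      intro h
      have : (1 : FractionalIdeal (nonZeroDivisors D) K) ≤ 0 := h ▸ h1J
      simpa using this.antisymm (FractionalIdeal.zero_le _)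
    -- membership of powers of `J` in `R`
    have hJR : (J : Submodule D K) ≤ Subalgebra.toSubmodule R := by
      intro z hz
      have hz' : z ∈ ((1 : FractionalIdeal (nonZeroDivisors D) K) : Submodule D K) ⊔
          ((FractionalIdeal.spanSingleton (nonZeroDivisors D) x : FractionalIdeal (nonZeroDivisors D) K) : Submodule D K) := by
        rw [← Submodule.add_eq_sup, ← FractionalIdeal.coe_add, ← hJdef]; exact hz
      obtain ⟨a, ha, b, hb, rfl⟩ := Submodule.mem_sup.mp hz'
      refine R.add_mem ?_ ?_
      · obtain ⟨d, rfl⟩ := (FractionalIdeal.mem_one_iff (nonZeroDivisors D)).mp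
          (FractionalIdeal.mem_coe.mp ha)
        exact R.algebraMap_mem d
      · obtain ⟨d, rfl⟩ := (FractionalIdeal.mem_spanSingleton (nonZeroDivisors D)).mp
          (FractionalIdeal.mem_coe.mp hb)
        exact Subalgebra.smul_mem R hx d
    have hpowR : ∀ k : ℕ, ((J : Submodule D K)) ^ (k + 1) ≤ Subalgebra.toSubmodule R := by
      intro k
      induction k with
      | zero => simpa using hJR
      | succ k ih =>
        rw [pow_succ]
        exact Submodule.mul_le.mpr fun a ha b hb => R.mul_mem (ih ha) (hJR hb)
    have hxpow : ∀ k : ℕ, x ∈ J ^ (k + 1) := by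
      intro k
      induction k with
      | zero => simpa using hxJ
      | succ k ih =>
        rw [pow_succ]
        have h1 : (1 : K) ∈ J := h1J (FractionalIdeal.one_mem_one (nonZeroDivisors D))
        simpa using FractionalIdeal.mul_mem_mul ih h1
    -- torsion of the class group gives a principal power
    set u : (FractionalIdeal (nonZeroDivisors D) K)ˣ := Units.mk0 J hJ0 with hu
    obtain ⟨n, hn0, hn⟩ := (isOfFinOrder_iff_pow_eq_one).mp (htor (ClassGroup.mk K u))
    rw [← map_pow] at hn
    have hprin : ((u ^ n : (FractionalIdeal (nonZeroDivisors D) K)ˣ) : Submodule D K).IsPrincipal :=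
      ClassGroup.mk_eq_one_iff.mp hn
    obtain ⟨y, hy⟩ := hprin
    have hun : ((u ^ n : (FractionalIdeal (nonZeroDivisors D) K)ˣ) : FractionalIdeal (nonZeroDivisors D) K) = J ^ n := by
      rw [hu]; push_cast; rfl
    have hJn : J ^ n = FractionalIdeal.spanSingleton (nonZeroDivisors D) y := by
      apply FractionalIdeal.coeToSubmodule_injective
      simp only [← hun, FractionalIdeal.coe_spanSingleton]
      exact hy
    obtain ⟨m, rfl⟩ : ∃ m, n = m + 1 := ⟨n - 1, (Nat.succ_pred_eq_of_pos hn0).symm⟩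
    have hy0 : y ≠ 0 := by
      intro h
      apply pow_ne_zero (m + 1) hJ0
      rw [hJn, h, FractionalIdeal.spanSingleton_zero]
    -- `y ∈ R`
    have hyJn : y ∈ J ^ (m + 1) := by
      rw [hJn]; exact FractionalIdeal.mem_spanSingleton_self (nonZeroDivisors D) y
    have hyR : y ∈ R := by
      refine hpowR m ?_
      rw [← FractionalIdeal.coe_pow]
      exact FractionalIdeal.mem_coe.mpr hyJn
    -- `y⁻¹` comes from some `s : D`
    have hinv : (J ^ (m + 1))⁻¹ = FractionalIdeal.spanSingleton (nonZeroDivisors D) y⁻¹ := by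
      rw [hJn, FractionalIdeal.spanSingleton_inv]
    have h1pow : ∀ k : ℕ, (1 : K) ∈ J ^ (k + 1) := by
      intro k
      induction k with
      | zero => simpa using FractionalIdeal.one_le.mp h1J
      | succ k ih =>
        rw [pow_succ]
        simpa using FractionalIdeal.mul_mem_mul ih (FractionalIdeal.one_le.mp h1J)
    have hJninv_le : (J ^ (m + 1))⁻¹ ≤ 1 := by
      have hmul : (J ^ (m + 1))⁻¹ * (J ^ (m + 1)) = 1 := by
        rw [mul_comm]
        exact mul_inv_cancel₀ (pow_ne_zero _ hJ0)
      calc (J ^ (m + 1))⁻¹ = (J ^ (m + 1))⁻¹ * 1 := (mul_one _).symm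
        _ ≤ (J ^ (m + 1))⁻¹ * J ^ (m + 1) :=
            mul_le_mul_right (FractionalIdeal.one_le.mpr (h1pow m)) _
        _ = 1 := hmul
    have hyinv_mem : y⁻¹ ∈ (J ^ (m + 1))⁻¹ := by
      rw [hinv]; exact FractionalIdeal.mem_spanSingleton_self (nonZeroDivisors D) y⁻¹
    obtain ⟨s, hs⟩ := (FractionalIdeal.mem_one_iff (nonZeroDivisors D)).mp (hJninv_le hyinv_mem)
    -- `y⁻¹ * x` comes from some `a : D`
    have hmul1 : y⁻¹ * x ∈ (1 : FractionalIdeal (nonZeroDivisors D) K) := by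
      have := FractionalIdeal.mul_mem_mul hyinv_mem (hxpow m)
      rwa [mul_comm ((J ^ (m+1))⁻¹), mul_inv_cancel₀ (pow_ne_zero _ hJ0)] at this
    obtain ⟨a, ha⟩ := (FractionalIdeal.mem_one_iff (nonZeroDivisors D)).mp hmul1
    refine ⟨a, s, ?_, by rw [hs, ha]⟩
    -- `s` is a unit in `R` with inverse `y`
    refine isUnit_iff_exists_inv.mpr ⟨⟨y, hyR⟩, ?_⟩
    apply Subtype.ext
    show (algebraMap D K s) * y = 1
    rw [hs, inv_mul_cancel₀ hy0]
  refine ⟨?_, ?_, ?_⟩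
  · rintro ⟨s, hs⟩
    exact hs
  · rintro ⟨x, hx⟩
    obtain ⟨a, s, hs, h⟩ := key x hx
    refine ⟨⟨a, ⟨s, hs⟩⟩, ?_⟩
    apply Subtype.ext
    show x * algebraMap D K s = algebraMap D K a
    rw [mul_comm, h]
  · intro a b h
    exact ⟨1, by simpa using hinj h⟩
end

section
/- Let A be a finite quotient PID that is not a field, with fraction field K. Extend the ideal norm to K by N_A(a/b) = N_A(a)/N_A(b). For each nonzero prime ideal 𝔭 of A define |x|_𝔭 = |A/𝔭|^{−v_𝔭(x)}. Then for every nonzero a in A, N_A(a) · ∏_𝔭 |a|_𝔭 = 1, where the product runs over all nonzero prime ideals 𝔭 of A (and is a finite product since |a|_𝔭 = 1 for all but finitely many 𝔭). -/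
open scoped BigOperators

open UniqueFactorizationMonoid Submodule in
/-- Product formula: let `A` be a finite quotient PID that is not a field. For each nonzero
prime ideal `𝔭` set `|a|_𝔭 = |A/𝔭|^{-v_𝔭(a)}`, where `v_𝔭(a)` is the exponent of `𝔭` in
the factorization of `aA` (characterized by `aA ⊆ 𝔭^{v} ` and `aA ⊄ 𝔭^{v+1}`). Then for
every nonzero `a ∈ A` the family `(|a|_𝔭)_𝔭` equals `1` for all but finitely many `𝔭` and
`N_A(a) · ∏_𝔭 |a|_𝔭 = 1`, where `N_A(a) = |A/aA|`. -/
theorem product_formula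
    (A : Type*) [CommRing A] [IsDomain A] [IsPrincipalIdealRing A]
    (hnf : ¬ IsField A)
    (hfq : ∀ I : Ideal A, I ≠ ⊥ → Finite (A ⧸ I))
    (a : A) (ha : a ≠ 0)
    (v : {P : Ideal A // P.IsPrime ∧ P ≠ ⊥} → ℕ)
    (hv : ∀ P : {P : Ideal A // P.IsPrime ∧ P ≠ ⊥},
      Ideal.span {a} ≤ (P : Ideal A) ^ (v P) ∧
        ¬ Ideal.span {a} ≤ (P : Ideal A) ^ (v P + 1)) :
    (Function.mulSupport fun P : {P : Ideal A // P.IsPrime ∧ P ≠ ⊥} =>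
      ((Nat.card (A ⧸ (P : Ideal A)) : ℝ) ^ (v P))⁻¹).Finite ∧
    (Nat.card (A ⧸ Ideal.span {a}) : ℝ) *
      ∏ᶠ P : {P : Ideal A // P.IsPrime ∧ P ≠ ⊥},
        ((Nat.card (A ⧸ (P : Ideal A)) : ℝ) ^ (v P))⁻¹ = 1 := by
  classical
  have hInf : Infinite A := by
    by_contra h
    rw [not_infinite_iff_finite] at h
    exact hnf (Finite.isField_of_domain A)
  set I : Ideal A := Ideal.span {a} with hIdef
  have hI0 : I ≠ 0 := by
    simpa [hIdef, Ideal.span_singleton_eq_bot] using ha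
  -- multiplicativity of cardQuot
  have hmul : ∀ J₁ J₂ : Ideal A,
      cardQuot (J₁ * J₂) = cardQuot J₁ * cardQuot J₂ := by
    intro J₁ J₂
    exact UniqueFactorizationMonoid.multiplicative_of_coprime cardQuot J₁ J₂
      (cardQuot_bot _ _)
      (fun {I J} hI => by simp [Ideal.isUnit_iff.mp hI, Ideal.mul_top])
      (fun {I} i hI =>
        have : Ideal.IsPrime I := Ideal.isPrime_of_prime hI
        cardQuot_pow_of_prime hI.ne_zero)
      fun {I J} hIJ => cardQuot_mul_of_coprime <| Ideal.isCoprime_iff_sup_eq.mpr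
        (Ideal.isUnit_iff.mp
          (hIJ (Ideal.dvd_iff_le.mpr le_sup_left) (Ideal.dvd_iff_le.mpr le_sup_right)))
  let N : Ideal A →* ℕ :=
    { toFun := cardQuot
      map_one' := by rw [Ideal.one_eq_top, cardQuot_top]
      map_mul' := hmul }
  -- the finset of prime factors
  set S : Finset (Ideal A) := (normalizedFactors I).toFinset with hSdef
  have hSprime : ∀ Q ∈ S, Prime Q := fun Q hQ =>
    prime_of_normalized_factor Q (Multiset.mem_toFinset.mp hQ)
  have hprod : ∏ Q ∈ S, Q ^ ((normalizedFactors I).count Q) = I := by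
    rw [← Finset.prod_multiset_count]
    exact associated_iff_eq.mp (prod_normalizedFactors hI0)
  have hcount : ∀ Pb : {P : Ideal A // P.IsPrime ∧ P ≠ ⊥},
      (normalizedFactors I).count Pb.1 = v Pb := fun Pb => by
    haveI := Pb.2.1
    exact Ideal.count_normalizedFactors_eq (hv Pb).1 (hv Pb).2
  -- the finset in the subtype
  let s : Finset {P : Ideal A // P.IsPrime ∧ P ≠ ⊥} :=
    S.attach.image fun Q =>
      ⟨Q.1, Ideal.isPrime_of_prime (hSprime Q.1 Q.2), (hSprime Q.1 Q.2).ne_zero⟩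
  have hsupp : (Function.mulSupport fun P : {P : Ideal A // P.IsPrime ∧ P ≠ ⊥} =>
      ((Nat.card (A ⧸ (P : Ideal A)) : ℝ) ^ (v P))⁻¹) ⊆ ↑s := by
    intro Pb hPb
    have hvne : v Pb ≠ 0 := by
      intro h0
      apply hPb
      simp [h0]
    have hmem : Pb.1 ∈ S := by
      rw [hSdef, Multiset.mem_toFinset, ← Multiset.count_pos, hcount Pb]
      exact Nat.pos_of_ne_zero hvne
    simp only [s, Finset.coe_image, Set.mem_image, Finset.mem_coe, Finset.mem_attach]
    exact ⟨⟨Pb.1, hmem⟩, trivial, Subtype.ext rfl⟩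
  constructor
  · exact Set.Finite.subset s.finite_toSet hsupp
  · have hfin := finprod_eq_prod_of_mulSupport_subset
      (fun P : {P : Ideal A // P.IsPrime ∧ P ≠ ⊥} =>
        ((Nat.card (A ⧸ (P : Ideal A)) : ℝ) ^ (v P))⁻¹) hsupp
    rw [hfin]
    -- rewrite the product over s as a product over S
    have hprodS : ∏ P ∈ s, ((Nat.card (A ⧸ (P : Ideal A)) : ℝ) ^ (v P))⁻¹
        = ∏ Q ∈ S, ((Nat.card (A ⧸ Q) : ℝ) ^ ((normalizedFactors I).count Q))⁻¹ := by
      rw [Finset.prod_image]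
      · rw [← Finset.prod_attach S
          (fun Q => ((Nat.card (A ⧸ Q) : ℝ) ^ ((normalizedFactors I).count Q))⁻¹)]
        refine Finset.prod_congr rfl fun Q _ => ?_
        rw [← hcount]
      · intro Q₁ _ Q₂ _ h
        exact Subtype.ext (congrArg (fun x : {P : Ideal A // P.IsPrime ∧ P ≠ ⊥} => x.1) h)
    rw [hprodS]
    -- the norm of I is the product of norms of prime powers
    have hnorm : cardQuot I = ∏ Q ∈ S, (cardQuot Q) ^ ((normalizedFactors I).count Q) := by
      conv_lhs => rw [← hprod]
      rw [show (cardQuot : Ideal A → ℕ) = N from rfl, map_prod]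
      refine Finset.prod_congr rfl fun Q hQ => ?_
      haveI : Q.IsPrime := Ideal.isPrime_of_prime (hSprime Q hQ)
      exact cardQuot_pow_of_prime (hSprime Q hQ).ne_zero
    have hcardI : Nat.card (A ⧸ I) = cardQuot I := (cardQuot_apply I).symm
    rw [hcardI, hnorm]
    push_cast
    rw [← Finset.prod_mul_distrib]
    refine Finset.prod_eq_one fun Q hQ => ?_
    have hQne : Q ≠ ⊥ := (hSprime Q hQ).ne_zero
    haveI := hfq Q hQne
    have : (Nat.card (A ⧸ Q) : ℝ) ≠ 0 := by
      exact_mod_cast Nat.card_pos.ne'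
    rw [cardQuot_apply]
    exact mul_inv_cancel₀ (pow_ne_zero _ this)
end
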